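/- arXiv:1504.06334 — 8 statements merged into one kernel-verified Lean document; each statement's English description precedes it below -/
import Mathlib

section
/- For fixed p > 1, let ω_p be the inverse of H_p(z) = -(p-1)z^p + p z^{p-1} on [1, p/(p-1)]. Then the function U(x) = ω_p(x)^p / x is strictly decreasing on (0, 1]. -/
open Set

private lemma H_strictAnti (p : ℝ) (hp : 1 < p) :
    StrictAntiOn (fun z : ℝ => -(p - 1) * z ^ p + p * z ^ (p - 1)) (Set.Ici 1) := by
  have h0 : (0:ℝ) < p - 1 := by linarith
  apply strictAntiOn_of_deriv_neg (convex_Ici 1)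
  · intro z hz
    have hz0 : z ≠ 0 := by simp at hz; intro h; simp [h] at hz; linarith
    have c1 : ContinuousAt (fun z : ℝ => z ^ p) z :=
      Real.continuousAt_rpow_const z p (Or.inl hz0)
    have c2 : ContinuousAt (fun z : ℝ => z ^ (p - 1)) z :=
      Real.continuousAt_rpow_const z (p - 1) (Or.inl hz0)
    have c : ContinuousAt (fun z : ℝ => -(p - 1) * z ^ p + p * z ^ (p - 1)) z :=
      (c1.const_mul _).add (c2.const_mul _)
    exact c.continuousWithinAt
  · intro z hz
    rw [interior_Ici] at hz
    have hz1 : (1:ℝ) < z := hz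
    have hz0 : z ≠ 0 := by positivity
    have d1 : HasDerivAt (fun z : ℝ => z ^ p) (p * z ^ (p - 1)) z :=
      Real.hasDerivAt_rpow_const (Or.inl hz0)
    have d2 : HasDerivAt (fun z : ℝ => z ^ (p - 1)) ((p - 1) * z ^ (p - 1 - 1)) z :=
      Real.hasDerivAt_rpow_const (Or.inl hz0)
    have d : HasDerivAt (fun z : ℝ => -(p - 1) * z ^ p + p * z ^ (p - 1))
        (-(p - 1) * (p * z ^ (p - 1)) + p * ((p - 1) * z ^ (p - 1 - 1))) z :=
      (d1.const_mul _).add (d2.const_mul _)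
    rw [d.deriv]
    have hlt : z ^ (p - 1 - 1) < z ^ (p - 1) :=
      Real.rpow_lt_rpow_of_exponent_lt hz1 (by linarith)
    nlinarith [mul_pos (mul_pos (show (0:ℝ) < p by linarith) h0) (sub_pos.2 hlt)]

/-- Lemma 2.1 (second part): `U(x) = ω_p(x)^p / x` is strictly decreasing on `(0,1]`. -/
theorem omega_pow_div_strictAntiOn (p : ℝ) (hp : 1 < p) (ω : ℝ → ℝ)
    (hω : ∀ x ∈ Set.Icc (0:ℝ) 1, ω x ∈ Set.Icc 1 (p / (p - 1)) ∧
      -(p - 1) * ω x ^ p + p * ω x ^ (p - 1) = x) :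
    StrictAntiOn (fun x : ℝ => ω x ^ p / x) (Set.Ioc 0 1) := by
  have hp0 : (0:ℝ) < p - 1 := by linarith
  intro x hx y hy hxy
  obtain ⟨hax, hHx⟩ := hω x ⟨hx.1.le, hx.2⟩
  obtain ⟨hay, hHy⟩ := hω y ⟨le_trans hx.1.le hxy.le, hy.2⟩
  set a := ω x with ha
  set b := ω y with hb
  have ha1 : (1:ℝ) ≤ a := hax.1
  have hb1 : (1:ℝ) ≤ b := hay.1
  have ha0 : (0:ℝ) < a := by linarith
  have hb0 : (0:ℝ) < b := by linarith
  -- b < a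
  have hba : b < a := by
    by_contra h
    push_neg at h
    rcases eq_or_lt_of_le h with h | h
    · rw [h] at hHx; rw [hHx] at hHy; linarith
    · have := H_strictAnti p hp (mem_Ici.2 ha1) (mem_Ici.2 hb1) h
      simp only at this
      rw [hHx, hHy] at this
      linarith
  -- factorizations
  have hap : a ^ p = a ^ (p - 1) * a := by
    rw [show p = (p - 1) + 1 by ring, Real.rpow_add ha0, Real.rpow_one]
    ring_nf
  have hbp : b ^ p = b ^ (p - 1) * b := by
    rw [show p = (p - 1) + 1 by ring, Real.rpow_add hb0, Real.rpow_one]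
    ring_nf
  have hxa : x = a ^ (p - 1) * (p - (p - 1) * a) := by
    rw [← hHx, hap]; ring
  have hyb : y = b ^ (p - 1) * (p - (p - 1) * b) := by
    rw [← hHy, hbp]; ring
  have hap1 : (0:ℝ) < a ^ (p - 1) := Real.rpow_pos_of_pos ha0 _
  have hbp1 : (0:ℝ) < b ^ (p - 1) := Real.rpow_pos_of_pos hb0 _
  have hDa : (0:ℝ) < p - (p - 1) * a := by
    by_contra h
    push_neg at h
    nlinarith [hx.1]
  have hDb : (0:ℝ) < p - (p - 1) * b := by
    by_contra h
    push_neg at h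
    nlinarith [hy.1, lt_trans hx.1 hxy]
  have hUx : a ^ p / x = a / (p - (p - 1) * a) := by
    rw [hxa, hap]
    field_simp
  have hUy : b ^ p / y = b / (p - (p - 1) * b) := by
    rw [hyb, hbp]
    field_simp
  simp only
  rw [hUx, hUy, div_lt_div_iff₀ hDb hDa]
  nlinarith
end

section
/- Let p > 1, let g : (0,1] → ℝ≥0 be non-increasing and integrable, and let 0 < k ≤ 1. Then ∫_0^k (t^{-1} ∫_0^t g(u) du)^p dt = -(1/(p-1)) k^{1-p} (∫_0^k g)^p + (p/(p-1)) ∫_0^k g(t) (t^{-1} ∫_0^t g(u) du)^{p-1} dt, provided the left-hand side is finite. -/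
open Set MeasureTheory Filter

lemma prim_tendsto_zero {f : ℝ → ℝ} {k : ℝ} (hk : 0 < k)
    (hint : IntegrableOn f (Set.Ioc 0 k)) :
    Tendsto (fun ε => ∫ t in Set.Ioc (0:ℝ) ε, f t) (nhdsWithin 0 (Set.Ioi 0)) (nhds 0) := by
  have h1 : ContinuousOn (fun x => ∫ t in Set.Ioc (0:ℝ) x, f t) (Set.Icc 0 k) :=
    intervalIntegral.continuousOn_primitive
      ((integrableOn_Icc_iff_integrableOn_Ioc).2 hint)
  have h2 := (h1 0 (Set.left_mem_Icc.2 hk.le)).tendsto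
  simp only [Set.Ioc_self, Measure.restrict_empty, integral_zero_measure] at h2
  have h3 : nhdsWithin (0:ℝ) (Set.Ioi 0) = nhdsWithin 0 (Set.Ioc 0 k) :=
    (nhdsWithin_Ioc_eq_nhdsGT hk).symm
  rw [h3]
  exact h2.mono_left (nhdsWithin_mono _ Set.Ioc_subset_Icc_self)

lemma integral_Ioc_split {f : ℝ → ℝ} {k ε : ℝ} (hε : 0 < ε) (hεk : ε ≤ k)
    (hint : IntegrableOn f (Set.Ioc 0 k)) :
    ∫ t in Set.Ioc (0:ℝ) k, f t =
      (∫ t in Set.Ioc (0:ℝ) ε, f t) + ∫ t in Set.Ioc ε k, f t := by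
  rw [← Set.Ioc_union_Ioc_eq_Ioc hε.le hεk]
  exact setIntegral_union (Set.Ioc_disjoint_Ioc_of_le le_rfl) measurableSet_Ioc
    (hint.mono_set (by rw [← Set.Ioc_union_Ioc_eq_Ioc hε.le hεk]; exact Set.subset_union_left))
    (hint.mono_set (by rw [← Set.Ioc_union_Ioc_eq_Ioc hε.le hεk]; exact Set.subset_union_right))

lemma tail_tendsto {f : ℝ → ℝ} {k : ℝ} (hk : 0 < k)
    (hint : IntegrableOn f (Set.Ioc 0 k)) :
    Tendsto (fun ε => ∫ t in Set.Ioc ε k, f t) (nhdsWithin 0 (Set.Ioi 0))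
      (nhds (∫ t in Set.Ioc (0:ℝ) k, f t)) := by
  have h0 := prim_tendsto_zero hk hint
  have h1 : Tendsto (fun ε => (∫ t in Set.Ioc (0:ℝ) k, f t) - ∫ t in Set.Ioc (0:ℝ) ε, f t)
      (nhdsWithin 0 (Set.Ioi 0)) (nhds (∫ t in Set.Ioc (0:ℝ) k, f t)) := by
    simpa using (tendsto_const_nhds (x := ∫ t in Set.Ioc (0:ℝ) k, f t)
      (f := nhdsWithin (0:ℝ) (Set.Ioi 0))).sub h0
  refine h1.congr' ?_
  filter_upwards [Ioo_mem_nhdsGT_of_mem ⟨le_refl (0:ℝ), hk⟩] with ε hε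
  rw [integral_Ioc_split hε.1 hε.2.le hint]
  ring

/-- The integration-by-parts identity (3.5):
`∫₀ᵏ (t⁻¹∫₀ᵗ g)^p dt = -(p-1)⁻¹ k^{1-p} (∫₀ᵏ g)^p + p/(p-1) ∫₀ᵏ g(t)(t⁻¹∫₀ᵗ g)^{p-1} dt`. -/
theorem avg_pow_integral_identity (p : ℝ) (hp : 1 < p)
    (g : ℝ → ℝ) (hg_nonneg : ∀ t ∈ Set.Ioc (0:ℝ) 1, 0 ≤ g t)
    (hg_anti : AntitoneOn g (Set.Ioc 0 1))
    (hg_int : IntegrableOn g (Set.Ioc 0 1))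
    (k : ℝ) (hk : k ∈ Set.Ioc (0:ℝ) 1)
    (hfin : IntegrableOn
      (fun t => ((1 / t) * ∫ u in Set.Ioc (0:ℝ) t, g u) ^ p) (Set.Ioc 0 k)) :
    ∫ t in Set.Ioc (0:ℝ) k, ((1 / t) * ∫ u in Set.Ioc (0:ℝ) t, g u) ^ p =
      -(1 / (p - 1)) * k ^ (1 - p) * (∫ u in Set.Ioc (0:ℝ) k, g u) ^ p +
      (p / (p - 1)) * ∫ t in Set.Ioc (0:ℝ) k,
        g t * ((1 / t) * ∫ u in Set.Ioc (0:ℝ) t, g u) ^ (p - 1) := by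
  obtain ⟨hk0, hk1⟩ := hk
  have hp0 : (0:ℝ) < p := lt_trans one_pos hp
  have hp1 : (0:ℝ) < p - 1 := sub_pos.2 hp
  have hpne : p ≠ 0 := ne_of_gt hp0
  have hp1ne : p - 1 ≠ 0 := ne_of_gt hp1
  set G : ℝ → ℝ := fun x => ∫ u in Set.Ioc (0:ℝ) x, g u with hGdef
  set A : ℝ → ℝ := fun t => (1 / t) * G t with hAdef
  have hAt : ∀ t : ℝ, (1 / t) * G t = A t := fun _ => rfl
  simp only [show ∀ t : ℝ, (1 / t) * (∫ u in Set.Ioc (0:ℝ) t, g u) = A t from hAt] at hfin ⊢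
  -- basic facts about G
  have hGnn : ∀ x : ℝ, x ≤ 1 → 0 ≤ G x := by
    intro x hx
    exact setIntegral_nonneg measurableSet_Ioc (fun u hu => hg_nonneg u ⟨hu.1, hu.2.trans hx⟩)
  have hGadd : ∀ s t : ℝ, 0 ≤ s → s ≤ t → t ≤ 1 →
      G t = G s + ∫ u in Set.Ioc s t, g u := by
    intro s t hs hst ht1
    have h0 : Set.Ioc (0:ℝ) t = Set.Ioc 0 s ∪ Set.Ioc s t := (Set.Ioc_union_Ioc_eq_Ioc hs hst).symm
    show (∫ u in Set.Ioc (0:ℝ) t, g u) = _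
    rw [h0]
    exact setIntegral_union (Set.Ioc_disjoint_Ioc_of_le le_rfl) measurableSet_Ioc
      (hg_int.mono_set (Set.Ioc_subset_Ioc le_rfl (hst.trans ht1)))
      (hg_int.mono_set (Set.Ioc_subset_Ioc hs ht1))
  have hGmono : ∀ s t : ℝ, 0 ≤ s → s ≤ t → t ≤ 1 → G s ≤ G t := by
    intro s t hs hst ht1
    rw [hGadd s t hs hst ht1]
    have : 0 ≤ ∫ u in Set.Ioc s t, g u :=
      setIntegral_nonneg measurableSet_Ioc
        (fun u hu => hg_nonneg u ⟨hs.trans_lt hu.1, hu.2.trans ht1⟩)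
    linarith
  have hconst_int : ∀ (s t c : ℝ), IntegrableOn (fun _ => c) (Set.Ioc s t) := by
    intro s t c
    exact integrableOn_const (by simp [Real.volume_Ioc])
  have havg : ∀ t ∈ Set.Ioc (0:ℝ) 1, t * g t ≤ G t := by
    intro t ht
    have h1 : ∫ u in Set.Ioc (0:ℝ) t, (g t : ℝ) ≤ ∫ u in Set.Ioc (0:ℝ) t, g u :=
      setIntegral_mono_on (hconst_int 0 t (g t))
        (hg_int.mono_set (Set.Ioc_subset_Ioc le_rfl ht.2)) measurableSet_Ioc
        (fun u hu => hg_anti ⟨hu.1, hu.2.trans ht.2⟩ ht hu.2)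
    have h2 : ∫ u in Set.Ioc (0:ℝ) t, (g t : ℝ) = t * g t := by
      simp [Real.volume_Ioc, ENNReal.toReal_ofReal ht.1.le, ht.1.le]
    rw [h2] at h1
    exact h1
  have hcontG : ContinuousOn G (Set.Icc 0 1) :=
    intervalIntegral.continuousOn_primitive
      ((integrableOn_Icc_iff_integrableOn_Ioc).2 hg_int)
  by_cases hz : ∀ t ∈ Set.Ioc (0:ℝ) 1, g t = 0
  · -- trivial case : g vanishes
    have hGz : ∀ x : ℝ, x ≤ 1 → G x = 0 := by
      intro x hx
      show (∫ u in Set.Ioc (0:ℝ) x, g u) = 0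
      rw [setIntegral_congr_fun measurableSet_Ioc
        (fun u hu => hz u ⟨hu.1, hu.2.trans hx⟩ : Set.EqOn g (fun _ => (0:ℝ)) _)]
      simp
    have e1 : ∫ t in Set.Ioc (0:ℝ) k, A t ^ p = 0 := by
      rw [setIntegral_congr_fun measurableSet_Ioc
        (fun t ht => by
          simp only [hAdef, hGz t (ht.2.trans hk1), mul_zero, Real.zero_rpow hpne]
          : Set.EqOn (fun t => A t ^ p) (fun _ => (0:ℝ)) _)]
      simp
    have e2 : ∫ t in Set.Ioc (0:ℝ) k, g t * A t ^ (p - 1) = 0 := by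
      rw [setIntegral_congr_fun measurableSet_Ioc
        (fun t ht => by
          simp only [hz t ⟨ht.1, ht.2.trans hk1⟩, zero_mul]
          : Set.EqOn (fun t => g t * A t ^ (p - 1)) (fun _ => (0:ℝ)) _)]
      simp
    rw [e1, e2]
    show (0:ℝ) = -(1 / (p - 1)) * k ^ (1 - p) * G k ^ p + (p / (p - 1)) * 0
    rw [hGz k hk1, Real.zero_rpow hpne]
    ring
  · -- main case
    push_neg at hz
    obtain ⟨t₁, ht₁, hgt₁⟩ := hz
    have hGpos : ∀ x ∈ Set.Ioc (0:ℝ) 1, 0 < G x := by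
      intro x hx
      rcases lt_or_eq_of_le (hGnn x hx.2) with h | h
      · exact h
      · exfalso
        have hgx : g x = 0 := by
          have h1 := havg x hx
          have h2 := hg_nonneg x hx
          nlinarith [hx.1]
        have hg0 : ∀ t ∈ Set.Ioc (0:ℝ) 1, g t = 0 := by
          intro t ht
          rcases le_or_gt t x with htx | htx
          · have h1 := havg t ht
            have h2 := hGmono t x ht.1.le htx hx.2
            have h3 := hg_nonneg t ht
            nlinarith [ht.1]
          · have h1 := hg_anti hx ht htx.le
            have h2 := hg_nonneg t ht
            rw [hgx] at h1
            linarith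
        exact hgt₁ (hg0 t₁ ht₁)
    have hApos : ∀ t ∈ Set.Ioc (0:ℝ) k, 0 < A t := by
      intro t ht
      exact mul_pos (one_div_pos.2 ht.1) (hGpos t ⟨ht.1, ht.2.trans hk1⟩)
    have hAnn : ∀ t ∈ Set.Ioc (0:ℝ) k, 0 ≤ A t := fun t ht => (hApos t ht).le
    -- base identities for rpow
    have hbase : ∀ q : ℝ, ∀ t ∈ Set.Ioc (0:ℝ) k, A t ^ q = t ^ (-q) * G t ^ q := by
      intro q t ht
      have hGt := (hGnn t (ht.2.trans hk1))
      rw [hAdef]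
      show ((1/t) * G t) ^ q = _
      rw [Real.mul_rpow (one_div_nonneg.2 ht.1.le) hGt, one_div,
        Real.inv_rpow ht.1.le, ← Real.rpow_neg ht.1.le]
    -- g ≤ A on Ioc 0 k
    have hgA : ∀ t ∈ Set.Ioc (0:ℝ) k, g t ≤ A t := by
      intro t ht
      have h1 := havg t ⟨ht.1, ht.2.trans hk1⟩
      rw [hAdef]
      show g t ≤ (1/t) * G t
      rw [one_div, ← div_eq_inv_mul, le_div_iff₀ ht.1]
      linarith
    -- A is antitone on Ioc 0 k
    have hAanti : ∀ s ∈ Set.Ioc (0:ℝ) k, ∀ t ∈ Set.Ioc (0:ℝ) k, s ≤ t → A t ≤ A s := by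
      intro s hs t ht hst
      have hI : ∫ u in Set.Ioc s t, g u ≤ (t - s) * g s := by
        have h1 : ∫ u in Set.Ioc s t, g u ≤ ∫ u in Set.Ioc s t, (g s : ℝ) :=
          setIntegral_mono_on (hg_int.mono_set (Set.Ioc_subset_Ioc hs.1.le (ht.2.trans hk1)))
            (hconst_int s t (g s)) measurableSet_Ioc
            (fun u hu => hg_anti ⟨hs.1, hs.2.trans hk1⟩
              ⟨hs.1.trans hu.1, hu.2.trans (ht.2.trans hk1)⟩ hu.1.le)
        have h2 : ∫ u in Set.Ioc s t, (g s : ℝ) = (t - s) * g s := by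
          simp [Real.volume_Ioc, ENNReal.toReal_ofReal (sub_nonneg.2 hst), hst]
        linarith
      have hGst := hGadd s t hs.1.le hst (ht.2.trans hk1)
      have h3 := havg s ⟨hs.1, hs.2.trans hk1⟩
      have h4 := hg_nonneg s ⟨hs.1, hs.2.trans hk1⟩
      have h5 := hGnn s (hs.2.trans hk1)
      rw [hAdef]
      show (1/t) * G t ≤ (1/s) * G s
      rw [one_div, one_div, ← div_eq_inv_mul, ← div_eq_inv_mul,
        div_le_div_iff₀ ht.1 hs.1]
      have hA1 : (∫ u in Set.Ioc s t, g u) * s ≤ ((t - s) * g s) * s :=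
        mul_le_mul_of_nonneg_right hI hs.1.le
      have hA2 : (t - s) * (s * g s) ≤ (t - s) * G s :=
        mul_le_mul_of_nonneg_left h3 (sub_nonneg.2 hst)
      rw [hGst]
      nlinarith [hA1, hA2]
    -- integrability of g * A^(p-1)
    have hcontA : ContinuousOn A (Set.Ioc 0 k) := by
      apply ContinuousOn.mul
      · exact continuousOn_const.div continuousOn_id (fun t ht => ne_of_gt ht.1)
      · exact hcontG.mono (fun t ht => ⟨ht.1.le, ht.2.trans hk1⟩)
    have hfin2 : IntegrableOn (fun t => g t * A t ^ (p - 1)) (Set.Ioc 0 k) := by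
      apply Integrable.mono' hfin
      · exact ((hg_int.mono_set (Set.Ioc_subset_Ioc le_rfl hk1)).aestronglyMeasurable).mul
          ((hcontA.rpow_const (fun t ht => Or.inr hp1.le)).aestronglyMeasurable
            measurableSet_Ioc)
      · filter_upwards [ae_restrict_mem measurableSet_Ioc] with t ht
        have h1 := hg_nonneg t ⟨ht.1, ht.2.trans hk1⟩
        have h2 : (0:ℝ) ≤ A t ^ (p-1) := Real.rpow_nonneg (hAnn t ht) _
        rw [Real.norm_of_nonneg (mul_nonneg h1 h2)]
        have h3 : A t ^ p = A t * A t ^ (p - 1) := by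
          rw [← Real.rpow_one_add' (hAnn t ht) (by linarith)]
          ring_nf
        rw [h3]
        exact mul_le_mul_of_nonneg_right (hgA t ht) h2
    -- key identity for each ε ∈ (0, k)
    have key : ∀ ε ∈ Set.Ioo (0:ℝ) k,
        (p - 1) * ∫ t in Set.Ioc ε k, A t ^ p
          = ε ^ (1 - p) * G ε ^ p - k ^ (1 - p) * G k ^ p
            + p * ∫ t in Set.Ioc ε k, g t * A t ^ (p - 1) := by
      intro ε hε
      obtain ⟨hε0, hεk⟩ := hε
      have hε1 : ε ≤ 1 := hεk.le.trans hk1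
      set gc : ℝ → ℝ := fun x => g (min (max x ε) 1) with hgcdef
      have hclamp : ∀ x : ℝ, min (max x ε) 1 ∈ Set.Ioc (0:ℝ) 1 :=
        fun x => ⟨lt_of_lt_of_le hε0 (le_min (le_max_right x ε) hε1), min_le_right _ _⟩
      have hgc_anti : Antitone gc := by
        intro x y hxy
        exact hg_anti (hclamp x) (hclamp y)
          (min_le_min (max_le_max hxy le_rfl) le_rfl)
      have hgc_eq : ∀ x : ℝ, ε ≤ x → x ≤ 1 → gc x = g x := by
        intro x h1 h2
        show g (min (max x ε) 1) = g x
        rw [max_eq_left h1, min_eq_left h2]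
      set gr : ℝ → ℝ := Function.rightLim gc with hgrdef
      have hgr_tend : ∀ x : ℝ, Tendsto gc (nhdsWithin x (Set.Ioi x)) (nhds (gr x)) :=
        fun x => hgc_anti.tendsto_rightLim x
      have hgr_ae : ∀ᵐ x ∂(volume : Measure ℝ), gr x = gc x := by
        have hc := hgc_anti.countable_not_continuousAt
        have hsub : {x : ℝ | ¬ gr x = gc x} ⊆ {x : ℝ | ¬ContinuousAt gc x} := by
          intro x hx hcont
          exact hx (tendsto_nhds_unique (hgr_tend x)
            (hcont.tendsto.mono_left nhdsWithin_le_nhds))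
        rw [ae_iff]
        exact measure_mono_null hsub (hc.measure_zero volume)
      have hGrep : ∀ x ∈ Set.Icc ε (1:ℝ), G x = G ε + ∫ t in ε..x, gc t := by
        intro x hx
        rw [intervalIntegral.integral_of_le hx.1]
        rw [setIntegral_congr_fun measurableSet_Ioc
          (fun u hu => hgc_eq u hu.1.le (hu.2.trans hx.2) : Set.EqOn gc g _)]
        exact hGadd ε x hε0.le hx.1 hx.2
      have hGderiv : ∀ x ∈ Set.Ioo ε k, HasDerivWithinAt G (gr x) (Set.Ioi x) x := by
        intro x hx
        have hx1 : x < 1 := lt_of_lt_of_le hx.2 hk1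
        have hint : IntervalIntegrable gc volume ε x := by
          rw [intervalIntegrable_iff_integrableOn_Ioc_of_le hx.1.le]
          exact IntegrableOn.congr_fun
            (hg_int.mono_set (Set.Ioc_subset_Ioc hε0.le hx1.le))
            (fun u hu => (hgc_eq u hu.1.le (hu.2.trans hx1.le)).symm) measurableSet_Ioc
        have hmeas : StronglyMeasurableAtFilter gc (nhdsWithin x (Set.Ioi x)) volume :=
          ⟨Set.univ, univ_mem, hgc_anti.measurable.aestronglyMeasurable⟩
        have htd : Tendsto gc ((nhdsWithin x (Set.Ioi x)) ⊓ (ae volume)) (nhds (gr x)) :=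
          (hgr_tend x).mono_left inf_le_left
        have hd0 : HasDerivWithinAt (fun u => G ε + ∫ t in ε..u, gc t) (gr x)
            (Set.Ici x) x :=
          HasDerivWithinAt.const_add _
            (intervalIntegral.integral_hasDerivWithinAt_of_tendsto_ae_right hint hmeas htd)
        have hd1 := hd0.mono Set.Ioi_subset_Ici_self
        refine hd1.congr_of_eventuallyEq ?_ ?_
        · filter_upwards [Ioo_mem_nhdsGT_of_mem (Set.mem_Ico.2 ⟨le_refl x, hx1⟩)] with u hu
          exact hGrep u ⟨(hx.1.trans hu.1).le, hu.2.le⟩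
        · exact hGrep x ⟨hx.1.le, hx1.le⟩
      set F : ℝ → ℝ := fun t => t ^ (1 - p) * G t ^ p with hFdef
      set D1 : ℝ → ℝ := fun t => ((1 - p) * t ^ (1 - p - 1)) * G t ^ p with hD1def
      set c : ℝ → ℝ := fun t => t ^ (1 - p) * (p * G t ^ (p - 1)) with hcdef
      set D : ℝ → ℝ := fun t =>
        ((1 - p) * t ^ (1 - p - 1)) * G t ^ p
          + t ^ (1 - p) * (p * G t ^ (p - 1) * gr t) with hDdef
      have hFderiv : ∀ x ∈ Set.Ioo ε k, HasDerivWithinAt F (D x) (Set.Ioi x) x := by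
        intro x hx
        have hx0 : 0 < x := hε0.trans hx.1
        have hGx : 0 < G x := hGpos x ⟨hx0, hx.2.le.trans hk1⟩
        have h1 : HasDerivAt (fun t : ℝ => t ^ (1 - p)) ((1 - p) * x ^ (1 - p - 1)) x :=
          Real.hasDerivAt_rpow_const (Or.inl (ne_of_gt hx0))
        have h2 : HasDerivAt (fun z : ℝ => z ^ p) (p * G x ^ (p - 1)) (G x) :=
          Real.hasDerivAt_rpow_const (Or.inl (ne_of_gt hGx))
        have h3 : HasDerivWithinAt (fun t => G t ^ p) (p * G x ^ (p - 1) * gr x)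
            (Set.Ioi x) x := h2.comp_hasDerivWithinAt x (hGderiv x hx)
        exact h1.hasDerivWithinAt.mul h3
      have hFcont : ContinuousOn F (Set.Icc ε k) := by
        apply ContinuousOn.mul
        · exact continuousOn_id.rpow_const
            (fun t ht => Or.inl (ne_of_gt (hε0.trans_le ht.1)))
        · exact (hcontG.mono (fun t ht => ⟨(hε0.trans_le ht.1).le, ht.2.trans hk1⟩)).rpow_const
            (fun t ht => Or.inr hp0.le)
      have hD1cont : ContinuousOn D1 (Set.Icc ε k) := by
        apply ContinuousOn.mul
        · exact continuousOn_const.mul (continuousOn_id.rpow_const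
            (fun t ht => Or.inl (ne_of_gt (hε0.trans_le ht.1))))
        · exact (hcontG.mono (fun t ht => ⟨(hε0.trans_le ht.1).le, ht.2.trans hk1⟩)).rpow_const
            (fun t ht => Or.inr hp0.le)
      have hccont : ContinuousOn c (Set.Icc ε k) := by
        apply ContinuousOn.mul
        · exact continuousOn_id.rpow_const
            (fun t ht => Or.inl (ne_of_gt (hε0.trans_le ht.1)))
        · exact continuousOn_const.mul
            ((hcontG.mono (fun t ht => ⟨(hε0.trans_le ht.1).le, ht.2.trans hk1⟩)).rpow_const
              (fun t ht => Or.inr hp1.le))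
      have hgrint : IntegrableOn gr (Set.Ioc ε k) := by
        have h1 : IntegrableOn gc (Set.Ioc ε k) :=
          IntegrableOn.congr_fun (hg_int.mono_set (Set.Ioc_subset_Ioc hε0.le hk1))
            (fun u hu => (hgc_eq u hu.1.le (hu.2.trans hk1)).symm) measurableSet_Ioc
        exact h1.congr (Filter.EventuallyEq.symm
          (ae_restrict_of_ae hgr_ae : gr =ᶠ[ae (volume.restrict (Set.Ioc ε k))] gc))
      have hD1int : IntegrableOn D1 (Set.Ioc ε k) :=
        hD1cont.integrableOn_Icc.mono_set Set.Ioc_subset_Icc_self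
      have hD2int : IntegrableOn (fun t => c t * gr t) (Set.Ioc ε k) := by
        obtain ⟨C, hC⟩ := isCompact_Icc.exists_bound_of_continuousOn hccont
        refine Integrable.bdd_mul (c := C) hgrint ?_ ?_
        · exact (hccont.aestronglyMeasurable measurableSet_Icc).mono_measure
            (Measure.restrict_mono Set.Ioc_subset_Icc_self le_rfl)
        · filter_upwards [ae_restrict_mem measurableSet_Ioc] with t ht
          exact hC t (Set.Ioc_subset_Icc_self ht)
      have hDeq : D = fun t => D1 t + c t * gr t := by
        funext t
        show _ = _
        rw [hDdef, hD1def, hcdef]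
        ring
      have hDint : IntervalIntegrable D volume ε k := by
        rw [intervalIntegrable_iff_integrableOn_Ioc_of_le hεk.le, hDeq]
        exact hD1int.add hD2int
      have hftc : ∫ y in ε..k, D y = F k - F ε :=
        intervalIntegral.integral_eq_sub_of_hasDeriv_right_of_le hεk.le hFcont hFderiv hDint
      rw [intervalIntegral.integral_of_le hεk.le] at hftc
      have e1 : ∫ t in Set.Ioc ε k, D t
          = (∫ t in Set.Ioc ε k, D1 t) + ∫ t in Set.Ioc ε k, c t * gr t := by
        rw [hDeq]
        exact integral_add hD1int hD2int
      have e2 : ∫ t in Set.Ioc ε k, D1 t = (1 - p) * ∫ t in Set.Ioc ε k, A t ^ p := by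
        rw [← integral_const_mul]
        apply setIntegral_congr_fun measurableSet_Ioc
        intro t ht
        have htk : t ∈ Set.Ioc (0:ℝ) k := ⟨hε0.trans ht.1, ht.2⟩
        show ((1 - p) * t ^ (1 - p - 1)) * G t ^ p = (1 - p) * A t ^ p
        rw [hbase p t htk]
        have hxp : (1:ℝ) - p - 1 = -p := by ring
        rw [hxp]
        ring
      have e3 : ∫ t in Set.Ioc ε k, c t * gr t
          = p * ∫ t in Set.Ioc ε k, g t * A t ^ (p - 1) := by
        rw [← integral_const_mul]
        apply integral_congr_ae
        filter_upwards [ae_restrict_of_ae hgr_ae, ae_restrict_mem measurableSet_Ioc]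
          with t h1 h2
        have htk : t ∈ Set.Ioc (0:ℝ) k := ⟨hε0.trans h2.1, h2.2⟩
        show c t * gr t = p * (g t * A t ^ (p - 1))
        rw [h1, hgc_eq t h2.1.le (h2.2.trans hk1), hcdef, hbase (p - 1) t htk]
        have hxp : -(p - 1) = 1 - p := by ring
        rw [hxp]
        ring
      have hFk : F k = k ^ (1 - p) * G k ^ p := rfl
      have hFε : F ε = ε ^ (1 - p) * G ε ^ p := rfl
      rw [e1, e2, e3, hFk, hFε] at hftc
      linarith
    -- boundary term bound and limit
    have hbound : ∀ ε ∈ Set.Ioc (0:ℝ) k,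
        ε ^ (1 - p) * G ε ^ p ≤ ∫ t in Set.Ioc (0:ℝ) ε, A t ^ p := by
      intro ε hε
      have h1 : ∀ t ∈ Set.Ioc (0:ℝ) ε, A ε ^ p ≤ A t ^ p := by
        intro t ht
        have htk : t ∈ Set.Ioc (0:ℝ) k := ⟨ht.1, ht.2.trans hε.2⟩
        exact Real.rpow_le_rpow (hAnn ε hε) (hAanti t htk ε hε ht.2) hp0.le
      have h2 : ∫ t in Set.Ioc (0:ℝ) ε, (A ε ^ p : ℝ) ≤ ∫ t in Set.Ioc (0:ℝ) ε, A t ^ p :=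
        setIntegral_mono_on (hconst_int 0 ε _)
          (hfin.mono_set (Set.Ioc_subset_Ioc le_rfl hε.2)) measurableSet_Ioc h1
      have h3 : ∫ _ in Set.Ioc (0:ℝ) ε, (A ε ^ p : ℝ) = ε * A ε ^ p := by
        simp [Real.volume_Ioc, ENNReal.toReal_ofReal hε.1.le, hε.1.le]
      have h4 : ε ^ (1 - p) * G ε ^ p = ε * A ε ^ p := by
        rw [hbase p ε hε, ← mul_assoc]
        congr 1
        rw [show (1:ℝ) - p = 1 + -p by ring,
          Real.rpow_one_add' hε.1.le (by intro hc; apply hpne; linarith)]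
      rw [h4]
      calc ε * A ε ^ p = ∫ _ in Set.Ioc (0:ℝ) ε, (A ε ^ p : ℝ) := h3.symm
        _ ≤ _ := h2
    have hblim : Tendsto (fun ε => ε ^ (1 - p) * G ε ^ p) (nhdsWithin 0 (Set.Ioi 0))
        (nhds 0) := by
      have hup := prim_tendsto_zero hk0 hfin
      refine tendsto_of_tendsto_of_tendsto_of_le_of_le'
        (tendsto_const_nhds (x := (0:ℝ))) hup ?_ ?_
      · filter_upwards [Ioc_mem_nhdsGT_of_mem (Set.mem_Ico.2 ⟨le_refl (0:ℝ), hk0⟩)]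
          with ε hε
        have h1 : (0:ℝ) ≤ ε ^ (1 - p) := Real.rpow_nonneg hε.1.le _
        have h2 : (0:ℝ) ≤ G ε ^ p := Real.rpow_nonneg (hGnn ε (hε.2.trans hk1)) _
        exact mul_nonneg h1 h2
      · filter_upwards [Ioc_mem_nhdsGT_of_mem (Set.mem_Ico.2 ⟨le_refl (0:ℝ), hk0⟩)]
          with ε hε
        exact hbound ε hε
    -- take the limit ε → 0⁺ in the key identity
    have hL1 : Tendsto (fun ε => ∫ t in Set.Ioc ε k, A t ^ p) (nhdsWithin 0 (Set.Ioi 0))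
        (nhds (∫ t in Set.Ioc (0:ℝ) k, A t ^ p)) := tail_tendsto hk0 hfin
    have hL2 : Tendsto (fun ε => ∫ t in Set.Ioc ε k, g t * A t ^ (p - 1))
        (nhdsWithin 0 (Set.Ioi 0))
        (nhds (∫ t in Set.Ioc (0:ℝ) k, g t * A t ^ (p - 1))) := tail_tendsto hk0 hfin2
    have hT1 : Tendsto (fun ε => (p - 1) * ∫ t in Set.Ioc ε k, A t ^ p)
        (nhdsWithin 0 (Set.Ioi 0))
        (nhds ((p - 1) * ∫ t in Set.Ioc (0:ℝ) k, A t ^ p)) := hL1.const_mul _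
    have hT2 : Tendsto (fun ε => ε ^ (1 - p) * G ε ^ p - k ^ (1 - p) * G k ^ p
          + p * ∫ t in Set.Ioc ε k, g t * A t ^ (p - 1))
        (nhdsWithin 0 (Set.Ioi 0))
        (nhds (0 - k ^ (1 - p) * G k ^ p
          + p * ∫ t in Set.Ioc (0:ℝ) k, g t * A t ^ (p - 1))) :=
      (hblim.sub tendsto_const_nhds).add (hL2.const_mul p)
    have heq : (fun ε => (p - 1) * ∫ t in Set.Ioc ε k, A t ^ p)
        =ᶠ[nhdsWithin (0:ℝ) (Set.Ioi 0)]
        (fun ε => ε ^ (1 - p) * G ε ^ p - k ^ (1 - p) * G k ^ p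
          + p * ∫ t in Set.Ioc ε k, g t * A t ^ (p - 1)) := by
      filter_upwards [Ioo_mem_nhdsGT_of_mem (Set.mem_Ico.2 ⟨le_refl (0:ℝ), hk0⟩)]
        with ε hε
      exact key ε hε
    have main : (p - 1) * ∫ t in Set.Ioc (0:ℝ) k, A t ^ p
        = 0 - k ^ (1 - p) * G k ^ p
          + p * ∫ t in Set.Ioc (0:ℝ) k, g t * A t ^ (p - 1) :=
      tendsto_nhds_unique (hT1.congr' heq) hT2
    show ∫ t in Set.Ioc (0:ℝ) k, A t ^ p
        = -(1 / (p - 1)) * k ^ (1 - p) * G k ^ p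
          + (p / (p - 1)) * ∫ t in Set.Ioc (0:ℝ) k, g t * A t ^ (p - 1)
    rw [← mul_right_inj' hp1ne, main]
    field_simp
    ring
end

section
/- Let p > 1, let g : (0,1] → ℝ≥0 be non-increasing with ∫_0^1 g(u)^p du < ∞, and let 0 < k ≤ 1. Then ∫_0^k (t^{-1} ∫_0^t g(u) du)^p dt ≤ -(1/(p-1)) k^{1-p} (∫_0^k g)^p + (p/(p-1)) (∫_0^k g^p)^{1/p} (∫_0^k (t^{-1} ∫_0^t g)^p dt)^{(p-1)/p}. -/
open Set MeasureTheory Filter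
open scoped NNReal ENNReal

/-- If `x ≤ c * x ^ ((p-1)/p) + d` with everything nonneg, then `x` is bounded. -/
lemma aux_self_bound {x c d p : ℝ} (hp : 1 < p) (hx : 0 ≤ x) (hc : 0 ≤ c) (hd : 0 ≤ d)
    (h : x ≤ c * x ^ ((p - 1) / p) + d) : x ≤ max ((2 * c) ^ p) (2 * d) := by
  rcases le_or_gt x (2 * d) with h' | h'
  · exact h'.trans (le_max_right _ _)
  refine le_trans ?_ (le_max_left _ _)
  have hx0 : 0 < x := lt_of_le_of_lt (by positivity) h'
  have hp0 : (0:ℝ) < p := lt_trans one_pos hp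
  have h2 : x / 2 ≤ c * x ^ ((p - 1) / p) := by linarith
  have hxe : x ^ ((1:ℝ)/p) * x ^ ((p - 1)/p) = x := by
    rw [← Real.rpow_add hx0]
    rw [show (1:ℝ)/p + (p-1)/p = 1 by field_simp; ring]
    exact Real.rpow_one x
  have hr : x ^ ((1:ℝ)/p) ≤ 2 * c := by
    have hpos : 0 < x ^ ((p - 1)/p) := Real.rpow_pos_of_pos hx0 _
    have : x ^ ((1:ℝ)/p) * x ^ ((p - 1)/p) ≤ (2 * c) * x ^ ((p - 1)/p) := by
      rw [hxe]; linarith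
    exact le_of_mul_le_mul_right this hpos
  calc x = (x ^ ((1:ℝ)/p)) ^ p := by
        rw [← Real.rpow_mul hx, show (1:ℝ)/p * p = 1 by field_simp]
        exact (Real.rpow_one x).symm
    _ ≤ (2 * c) ^ p := Real.rpow_le_rpow (Real.rpow_nonneg hx _) hr hp0.le

/-- Inequality (3.6), obtained from (3.5) by Hölder's inequality. -/
theorem avg_pow_integral_holder (p : ℝ) (hp : 1 < p)
    (g : ℝ → ℝ) (hg_nonneg : ∀ t ∈ Set.Ioc (0:ℝ) 1, 0 ≤ g t)
    (hg_anti : AntitoneOn g (Set.Ioc 0 1))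
    (hg_p : IntegrableOn (fun u => g u ^ p) (Set.Ioc 0 1))
    (k : ℝ) (hk : k ∈ Set.Ioc (0:ℝ) 1) :
    ∫ t in Set.Ioc (0:ℝ) k, ((1 / t) * ∫ u in Set.Ioc (0:ℝ) t, g u) ^ p ≤
      -(1 / (p - 1)) * k ^ (1 - p) * (∫ u in Set.Ioc (0:ℝ) k, g u) ^ p +
      (p / (p - 1)) * (∫ u in Set.Ioc (0:ℝ) k, g u ^ p) ^ (1 / p) *
        (∫ t in Set.Ioc (0:ℝ) k,
          ((1 / t) * ∫ u in Set.Ioc (0:ℝ) t, g u) ^ p) ^ ((p - 1) / p) := by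
  obtain ⟨hk0, hk1⟩ := hk
  have hp0 : (0:ℝ) < p := lt_trans one_pos hp
  have hp1 : (0:ℝ) < p - 1 := by linarith
  set q : ℝ := p / (p - 1) with hq
  have hpq : p.HolderConjugate q := Real.HolderConjugate.conjExponent hp
  have hq1 : 1 / q = (p - 1) / p := by rw [hq]; field_simp
  set F : ℝ → ℝ := fun t => ∫ u in Set.Ioc (0:ℝ) t, g u with hF
  set B : ℝ → ℝ := fun t => (1 / t) * F t with hB
  -- measurability and integrability of g
  have hgm : AEStronglyMeasurable g (volume.restrict (Ioc (0:ℝ) 1)) := by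
    have h1 : AEStronglyMeasurable (fun u => g u ^ p) (volume.restrict (Ioc (0:ℝ) 1)) :=
      hg_p.aestronglyMeasurable
    have hc : Continuous fun x : ℝ => x ^ p⁻¹ := by
      rw [continuous_iff_continuousAt]; intro x
      exact Real.continuousAt_rpow_const x p⁻¹ (Or.inr (by positivity))
    have h2 := hc.comp_aestronglyMeasurable h1
    refine h2.congr ?_
    filter_upwards [ae_restrict_mem measurableSet_Ioc] with u hu
    exact Real.rpow_rpow_inv (hg_nonneg u hu) (ne_of_gt hp0)
  have hg_int1 : IntegrableOn g (Ioc (0:ℝ) 1) := by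
    have hconst : IntegrableOn (fun _ : ℝ => (1:ℝ)) (Ioc (0:ℝ) 1) :=
      integrableOn_const measure_Ioc_lt_top.ne
    refine Integrable.mono' (hconst.add hg_p) hgm ?_
    filter_upwards [ae_restrict_mem measurableSet_Ioc] with u hu
    rw [Real.norm_of_nonneg (hg_nonneg u hu)]
    rcases le_or_gt (g u) 1 with h | h
    · have := Real.rpow_nonneg (hg_nonneg u hu) p
      simpa using by linarith
    · have h2 : g u ^ (1:ℝ) ≤ g u ^ p := Real.rpow_le_rpow_of_exponent_le h.le hp.le
      rw [Real.rpow_one] at h2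
      simpa using by linarith
  -- basic properties of F
  have hF_nonneg : ∀ t, t ≤ 1 → 0 ≤ F t := by
    intro t ht
    apply setIntegral_nonneg measurableSet_Ioc
    intro u hu
    exact hg_nonneg u ⟨hu.1, hu.2.trans ht⟩
  have hF_cont : ContinuousOn F (Icc 0 1) :=
    intervalIntegral.continuousOn_primitive ((integrableOn_Icc_iff_integrableOn_Ioc enorm_ne_top).2 hg_int1)
  have hB_nonneg : ∀ t ∈ Ioc (0:ℝ) k, 0 ≤ B t := by
    intro t ht
    exact mul_nonneg (one_div_nonneg.2 ht.1.le) (hF_nonneg t (ht.2.trans hk1))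
  -- the right-continuous regularization of g
  set r : ℝ → ℝ := fun x => sSup (g '' Ioc x 1) with hr
  have hne : ∀ x : ℝ, x < 1 → (g '' Ioc x 1).Nonempty :=
    fun x hx => ⟨g 1, 1, ⟨hx, le_refl 1⟩, rfl⟩
  have hbdd : ∀ x ∈ Ioo (0:ℝ) 1, BddAbove (g '' Ioc x 1) := by
    intro x hx
    refine ⟨g x, ?_⟩
    rintro y ⟨s, hs, rfl⟩
    exact hg_anti ⟨hx.1, hx.2.le⟩ ⟨hx.1.trans hs.1, hs.2⟩ hs.1.le
  have hr_le : ∀ x ∈ Ioo (0:ℝ) 1, r x ≤ g x := by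
    intro x hx
    refine csSup_le (hne x hx.2) ?_
    rintro y ⟨s, hs, rfl⟩
    exact hg_anti ⟨hx.1, hx.2.le⟩ ⟨hx.1.trans hs.1, hs.2⟩ hs.1.le
  have hle_r : ∀ x ∈ Ioo (0:ℝ) 1, ∀ s ∈ Ioc x 1, g s ≤ r x :=
    fun x hx s hs => le_csSup (hbdd x hx) ⟨s, hs, rfl⟩
  have hr_nonneg : ∀ x ∈ Ioo (0:ℝ) 1, 0 ≤ r x :=
    fun x hx => le_trans (hg_nonneg 1 ⟨one_pos, le_refl 1⟩) (hle_r x hx 1 ⟨hx.2, le_refl 1⟩)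
  have hr_anti : AntitoneOn r (Ioi (0:ℝ)) := by
    intro x hx y hy hxy
    rcases lt_or_ge y 1 with hy1 | hy1
    · refine csSup_le (hne y hy1) ?_
      rintro z ⟨s, hs, rfl⟩
      exact hle_r x ⟨hx, lt_of_le_of_lt hxy hy1⟩ s ⟨lt_of_le_of_lt hxy hs.1, hs.2⟩
    · have hempty : Ioc y 1 = ∅ := Ioc_eq_empty (not_lt.2 hy1)
      simp only [hr, hempty, Set.image_empty, Real.sSup_empty]
      rcases lt_or_ge x 1 with hx1 | hx1
      · exact hr_nonneg x ⟨hx, hx1⟩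
      · rw [Ioc_eq_empty (not_lt.2 hx1)]
        simp [Real.sSup_empty]
  have hr_ae : ∀ᵐ x ∂(volume.restrict (Ioc (0:ℝ) 1)), r x = g x := by
    have hcnt : Set.Countable {x | x ∈ Ioo (0:ℝ) 1 ∧ r x ≠ g x} := by
      have hsub : {x | x ∈ Ioo (0:ℝ) 1 ∧ r x ≠ g x} ⊆
          ⋃ n : ℚ, {x | x ∈ Ioo (0:ℝ) 1 ∧ r x < (n:ℝ) ∧ (n:ℝ) < g x} := by
        intro x hx
        obtain ⟨n, hn1, hn2⟩ := exists_rat_btwn (lt_of_le_of_ne (hr_le x hx.1) hx.2)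
        exact mem_iUnion.2 ⟨n, hx.1, hn1, hn2⟩
      refine Set.Countable.mono hsub (Set.countable_iUnion fun n => Set.Subsingleton.countable ?_)
      intro x hx y hy
      by_contra hne'
      rcases lt_or_gt_of_ne hne' with h | h
      · have h1 := hle_r x hx.1 y ⟨h, hy.1.2.le⟩
        have := hx.2.1; have := hy.2.2; linarith
      · have h1 := hle_r y hy.1 x ⟨h, hx.1.2.le⟩
        have := hy.2.1; have := hx.2.2; linarith
    have hnull : volume ({x | x ∈ Ioo (0:ℝ) 1 ∧ r x ≠ g x} ∪ {(1:ℝ)}) = 0 := by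
      exact measure_union_null (hcnt.measure_zero volume) (measure_singleton 1)
    have h1 : ∀ᵐ x ∂volume,
        x ∈ ({x | x ∈ Ioo (0:ℝ) 1 ∧ r x ≠ g x} ∪ {(1:ℝ)})ᶜ := compl_mem_ae_iff.2 hnull
    filter_upwards [ae_restrict_of_ae h1, ae_restrict_mem measurableSet_Ioc] with x hx hx2
    by_contra hne'
    rcases eq_or_lt_of_le hx2.2 with h1' | h1'
    · exact hx (Or.inr (by simp [h1']))
    · exact hx (Or.inl ⟨⟨hx2.1, h1'⟩, hne'⟩)
  have hr_ae_st : ∀ s t : ℝ, 0 ≤ s → t ≤ 1 →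
      r =ᶠ[ae (volume.restrict (Ioc s t))] g := by
    intro s t hs ht
    exact ae_restrict_of_ae_restrict_of_subset (Ioc_subset_Ioc hs ht) hr_ae
  -- right derivative of F is r
  have hFd : ∀ x ∈ Ioo (0:ℝ) 1, HasDerivWithinAt F (r x) (Ioi x) x := by
    intro x hx
    obtain ⟨hx0, hx1⟩ := hx
    set c : ℝ := x / 2 with hc
    have hc0 : 0 < c := by rw [hc]; linarith
    have hcx : c < x := by rw [hc]; linarith
    have hc1 : c ≤ 1 := by rw [hc]; linarith
    have hrint : IntegrableOn r (Ioc c x) := by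
      refine (hg_int1.mono_set (Ioc_subset_Ioc hc0.le hx1.le)).congr ?_
      exact (hr_ae_st c x hc0.le hx1.le).symm
    have hII : IntervalIntegrable r volume c x :=
      (intervalIntegrable_iff_integrableOn_Ioc_of_le hcx.le).2 hrint
    have hmeasb : StronglyMeasurableAtFilter r (nhdsWithin x (Ioi x)) volume := by
      refine ⟨Ioi c, mem_nhdsWithin_of_mem_nhds (Ioi_mem_nhds hcx), ?_⟩
      have hanti2 : Antitone (fun y => r (max y c)) := by
        intro u v huv
        exact hr_anti (mem_Ioi.2 (lt_max_of_lt_right hc0)) (mem_Ioi.2 (lt_max_of_lt_right hc0))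
          (max_le_max huv le_rfl)
      refine (hanti2.measurable.stronglyMeasurable.aestronglyMeasurable).congr ?_
      filter_upwards [ae_restrict_mem measurableSet_Ioi] with y hy
      simp [max_eq_left (le_of_lt (mem_Ioi.1 hy))]
    have hcont : ContinuousWithinAt r (Ioi x) x := by
      refine tendsto_order.2 ⟨fun m hm => ?_, fun u hu => ?_⟩
      · obtain ⟨z, hzmem, hz⟩ := exists_lt_of_lt_csSup (hne x hx1) hm
        obtain ⟨s, hs, rfl⟩ := hzmem
        have hIoo : Ioo x s ∈ nhdsWithin x (Ioi x) := Ioo_mem_nhdsGT_of_mem ⟨le_refl x, hs.1⟩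
        filter_upwards [hIoo] with y hy
        calc m < g s := hz
          _ ≤ r y := hle_r y ⟨hx0.trans hy.1, lt_of_lt_of_le hy.2 hs.2⟩ s ⟨hy.2, hs.2⟩
      · filter_upwards [self_mem_nhdsWithin] with y hy
        exact lt_of_le_of_lt
          (hr_anti (mem_Ioi.2 hx0) (mem_Ioi.2 (hx0.trans hy)) (le_of_lt hy)) hu
    have hprim : HasDerivWithinAt (fun u => ∫ t in c..u, r t) (r x) (Ici x) x :=
      intervalIntegral.integral_hasDerivWithinAt_right (s := Ici x) (t := Ioi x)
        hII hmeasb hcont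
    have hder1 : HasDerivWithinAt
        (fun u => (∫ t in Ioc (0:ℝ) c, g t) + ∫ t in c..u, r t) (r x) (Ioi x) x :=
      (hprim.const_add _).mono Ioi_subset_Ici_self
    have key : ∀ u, c ≤ u → u ≤ 1 →
        F u = (∫ t in Ioc (0:ℝ) c, g t) + ∫ t in c..u, r t := by
      intro u hcu hu1
      rw [intervalIntegral.integral_of_le hcu]
      have h1 : ∫ t in Ioc c u, r t = ∫ t in Ioc c u, g t :=
        integral_congr_ae (hr_ae_st c u hc0.le hu1)
      rw [h1, ← setIntegral_union (Set.Ioc_disjoint_Ioc_of_le le_rfl) measurableSet_Ioc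
        (hg_int1.mono_set (Ioc_subset_Ioc le_rfl hc1))
        (hg_int1.mono_set (Ioc_subset_Ioc hc0.le hu1)),
        Set.Ioc_union_Ioc_eq_Ioc hc0.le hcu]
    refine hder1.congr_of_eventuallyEq ?_ (key x hcx.le hx1.le)
    have hIoc : Ioc x 1 ∈ nhdsWithin x (Ioi x) := Ioc_mem_nhdsGT_of_mem ⟨le_refl x, hx1⟩
    filter_upwards [hIoc] with u hu
    exact key u (hcx.le.trans hu.1.le) hu.2
  -- derivative of φ
  set φ : ℝ → ℝ := fun t => t ^ (1 - p) * F t ^ p with hφ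
  set ψ : ℝ → ℝ := fun t => (1 - p) * B t ^ p + p * (B t ^ (p - 1) * g t) with hψ
  have hφd : ∀ x ∈ Ioo (0:ℝ) 1,
      HasDerivWithinAt φ
        ((1 - p) * x ^ (-p) * F x ^ p + p * (x ^ (1 - p) * F x ^ (p - 1)) * r x) (Ioi x) x := by
    intro x hx
    have hx0 := hx.1
    have h1 : HasDerivWithinAt (fun t : ℝ => t ^ (1 - p)) ((1 - p) * x ^ (1 - p - 1)) (Ioi x) x :=
      (Real.hasDerivAt_rpow_const (Or.inl hx0.ne')).hasDerivWithinAt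
    have houter : HasDerivAt (fun y : ℝ => y ^ p) (p * F x ^ (p - 1)) (F x) :=
      Real.hasDerivAt_rpow_const (Or.inr hp.le)
    have h2 : HasDerivWithinAt (fun t => F t ^ p) (p * F x ^ (p - 1) * r x) (Ioi x) x :=
      houter.comp_hasDerivWithinAt x (hFd x hx)
    have h3 := h1.mul h2
    have heq : (1 - p) * x ^ (1 - p - 1) * F x ^ p + x ^ (1 - p) * (p * F x ^ (p - 1) * r x)
        = (1 - p) * x ^ (-p) * F x ^ p + p * (x ^ (1 - p) * F x ^ (p - 1)) * r x := by
      rw [show (1:ℝ) - p - 1 = -p by ring]; ring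
    exact heq ▸ h3
  have hdψ : ∀ x ∈ Ioo (0:ℝ) 1,
      (1 - p) * x ^ (-p) * F x ^ p + p * (x ^ (1 - p) * F x ^ (p - 1)) * r x ≤ ψ x := by
    intro x hx
    have hx0 := hx.1
    have hFx : 0 ≤ F x := hF_nonneg x hx.2.le
    have e1 : B x ^ p = x ^ (-p) * F x ^ p := by
      simp only [hB]
      rw [Real.mul_rpow (by positivity) hFx, one_div, Real.inv_rpow hx0.le,
        ← Real.rpow_neg hx0.le]
    have e2 : B x ^ (p - 1) = x ^ (1 - p) * F x ^ (p - 1) := by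
      simp only [hB]
      rw [Real.mul_rpow (by positivity) hFx, one_div, Real.inv_rpow hx0.le,
        ← Real.rpow_neg hx0.le, show -(p-1) = 1 - p by ring]
    simp only [hψ, e1, e2]
    have hcoef : 0 ≤ p * (x ^ (1 - p) * F x ^ (p - 1)) :=
      mul_nonneg hp0.le (mul_nonneg (Real.rpow_nonneg hx0.le _) (Real.rpow_nonneg hFx _))
    have key := mul_le_mul_of_nonneg_left (hr_le x hx) hcoef
    linarith
  -- nonnegativity of g^p integrals
  have hgp_nonneg_int : ∀ s : Set ℝ, s ⊆ Ioc (0:ℝ) 1 → MeasurableSet s →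
      0 ≤ ∫ u in s, g u ^ p := by
    intro s hs hsm
    apply setIntegral_nonneg hsm
    intro u hu
    exact Real.rpow_nonneg (hg_nonneg u (hs hu)) p
  -- MemLp of g
  have hg_mem : ∀ s : Set ℝ, s ⊆ Ioc (0:ℝ) 1 → MeasurableSet s →
      MemLp g (ENNReal.ofReal p) (volume.restrict s) := by
    intro s hs hsm
    have hgs : AEStronglyMeasurable g (volume.restrict s) :=
      hgm.mono_measure (Measure.restrict_mono hs le_rfl)
    have hd : (ENNReal.ofReal p) / (ENNReal.ofReal p) = 1 :=
      ENNReal.div_self (ne_of_gt (ENNReal.ofReal_pos.2 hp0)) ENNReal.ofReal_ne_top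
    refine (memLp_norm_rpow_iff hgs (ne_of_gt (ENNReal.ofReal_pos.2 hp0))
      ENNReal.ofReal_ne_top).1 ?_
    rw [hd, ENNReal.toReal_ofReal hp0.le, memLp_one_iff_integrable]
    refine (hg_p.mono_set hs).congr ?_
    filter_upwards [ae_restrict_mem hsm] with u hu
    rw [Real.norm_of_nonneg (hg_nonneg u (hs hu))]
  -- φ bounds
  have hφ_nonneg : ∀ a ∈ Ioc (0:ℝ) 1, 0 ≤ φ a := by
    intro a ha
    exact mul_nonneg (Real.rpow_nonneg ha.1.le _) (Real.rpow_nonneg (hF_nonneg a ha.2) _)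
  have hφ_bound : ∀ a ∈ Ioc (0:ℝ) 1, φ a ≤ ∫ u in Ioc (0:ℝ) a, g u ^ p := by
    intro a ha
    obtain ⟨ha0, ha1⟩ := ha
    have hfin : IsFiniteMeasure (volume.restrict (Ioc (0:ℝ) a)) :=
      ⟨by rw [Measure.restrict_apply_univ]; exact measure_Ioc_lt_top⟩
    have hnn_g : 0 ≤ᵐ[volume.restrict (Ioc (0:ℝ) a)] g := by
      filter_upwards [ae_restrict_mem measurableSet_Ioc] with u hu
      exact hg_nonneg u ⟨hu.1, hu.2.trans ha1⟩
    have h := integral_mul_le_Lp_mul_Lq_of_nonneg hpq hnn_g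
      (ae_of_all _ fun _ => zero_le_one)
      (hg_mem _ (Ioc_subset_Ioc le_rfl ha1) measurableSet_Ioc) (memLp_const 1)
    simp only [mul_one] at h
    have h1q : ∫ _ in Ioc (0:ℝ) a, (1:ℝ) ^ q = a := by
      rw [show (fun _ : ℝ => (1:ℝ) ^ q) = fun _ : ℝ => (1:ℝ) by funext u; rw [Real.one_rpow]]
      simp [Real.volume_Ioc, ENNReal.toReal_ofReal ha0.le, ha0.le]
    rw [h1q] at h
    set R : ℝ := ∫ u in Ioc (0:ℝ) a, g u ^ p with hR
    have hR0 : 0 ≤ R := hgp_nonneg_int _ (Ioc_subset_Ioc le_rfl ha1) measurableSet_Ioc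
    have hFap : F a ^ p ≤ (R ^ (1/p) * a ^ (1/q)) ^ p :=
      Real.rpow_le_rpow (hF_nonneg a ha1) h hp0.le
    have hexp : (R ^ (1/p) * a ^ (1/q)) ^ p = R * a ^ (p - 1) := by
      rw [Real.mul_rpow (Real.rpow_nonneg hR0 _) (Real.rpow_nonneg ha0.le _),
        ← Real.rpow_mul hR0, ← Real.rpow_mul ha0.le,
        show 1/p * p = (1:ℝ) by field_simp, Real.rpow_one, hq1,
        show (p-1)/p * p = p - 1 by field_simp]
    calc φ a = a ^ (1 - p) * F a ^ p := rfl
      _ ≤ a ^ (1 - p) * (R * a ^ (p - 1)) := by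
          refine mul_le_mul_of_nonneg_left ?_ (Real.rpow_nonneg ha0.le _)
          rw [← hexp]; exact hFap
      _ = R * (a ^ (1 - p) * a ^ (p - 1)) := by ring
      _ = R := by
          rw [← Real.rpow_add ha0, show (1:ℝ) - p + (p - 1) = 0 by ring,
            Real.rpow_zero, mul_one]
  -- continuity helpers on [a, k]
  have hB_cont : ∀ a ∈ Ioo (0:ℝ) k, ContinuousOn B (Icc a k) := by
    intro a ha
    refine ContinuousOn.mul ?_ (hF_cont.mono (Icc_subset_Icc ha.1.le hk1))
    intro x hx
    refine ((continuousAt_const.div continuousAt_id ?_)).continuousWithinAt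
    exact ne_of_gt (lt_of_lt_of_le ha.1 hx.1)
  have hBp_cont : ∀ a ∈ Ioo (0:ℝ) k, ContinuousOn (fun t => B t ^ p) (Icc a k) :=
    fun a ha => (hB_cont a ha).rpow_const (fun x _ => Or.inr hp0.le)
  have hBp1_cont : ∀ a ∈ Ioo (0:ℝ) k, ContinuousOn (fun t => B t ^ (p - 1)) (Icc a k) :=
    fun a ha => (hB_cont a ha).rpow_const (fun x _ => Or.inr hp1.le)
  have hg_int_ak : ∀ a ∈ Ioo (0:ℝ) k, IntegrableOn g (Icc a k) := by
    intro a ha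
    exact hg_int1.mono_set (fun x hx => ⟨lt_of_lt_of_le ha.1 hx.1, hx.2.trans hk1⟩)
  have hBg_int : ∀ a ∈ Ioo (0:ℝ) k, IntegrableOn (fun t => B t ^ (p - 1) * g t) (Icc a k) :=
    fun a ha => (hg_int_ak a ha).continuousOn_mul (hBp1_cont a ha) isCompact_Icc
  have hψ_int : ∀ a ∈ Ioo (0:ℝ) k, IntegrableOn ψ (Icc a k) := by
    intro a ha
    exact (((hBp_cont a ha).integrableOn_Icc).const_mul (1 - p)).add
      (((hBg_int a ha)).const_mul p)
  have hBp_int : ∀ a ∈ Ioo (0:ℝ) k, IntegrableOn (fun t => B t ^ p) (Ioc a k) :=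
    fun a ha => ((hBp_cont a ha).integrableOn_Icc).mono_set Ioc_subset_Icc_self
  have hBpq_int : ∀ a ∈ Ioo (0:ℝ) k, IntegrableOn (fun t => B t ^ (p - 1) * g t) (Ioc a k) :=
    fun a ha => (hBg_int a ha).mono_set Ioc_subset_Icc_self
  -- FTC inequality on [a, k]
  have hFTC : ∀ a ∈ Ioo (0:ℝ) k, φ k - φ a ≤
      (1 - p) * (∫ t in Ioc a k, B t ^ p) + p * ∫ t in Ioc a k, (B t ^ (p - 1) * g t) := by
    intro a ha
    have hφc : ContinuousOn φ (Icc a k) := by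
      refine ContinuousOn.mul ?_
        ((hF_cont.mono (Icc_subset_Icc ha.1.le hk1)).rpow_const (fun x _ => Or.inr hp0.le))
      intro x hx
      exact (Real.continuousAt_rpow_const x (1 - p)
        (Or.inl (ne_of_gt (lt_of_lt_of_le ha.1 hx.1)))).continuousWithinAt
    have h := intervalIntegral.sub_le_integral_of_hasDeriv_right_of_le ha.2.le hφc
      (fun x hx => hφd x ⟨lt_trans ha.1 hx.1, lt_of_lt_of_le hx.2 hk1⟩)
      (hψ_int a ha)
      (fun x hx => hdψ x ⟨lt_trans ha.1 hx.1, lt_of_lt_of_le hx.2 hk1⟩)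
    rw [intervalIntegral.integral_of_le ha.2.le] at h
    have heq : ∫ y in Ioc a k, ψ y =
        (1 - p) * (∫ t in Ioc a k, B t ^ p) + p * ∫ t in Ioc a k, (B t ^ (p - 1) * g t) := by
      rw [← integral_const_mul, ← integral_const_mul,
        ← integral_add ((hBp_int a ha).const_mul _) ((hBpq_int a ha).const_mul _)]
    rw [heq] at h
    exact h
  -- Hölder inequality
  have hHolder : ∀ a ∈ Ioo (0:ℝ) k,
      (∫ t in Ioc a k, (B t ^ (p - 1) * g t)) ≤
        (∫ t in Ioc a k, g t ^ p) ^ (1 / p) * (∫ t in Ioc a k, B t ^ p) ^ ((p - 1) / p) := by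
    intro a ha
    have hsub : Ioc a k ⊆ Ioc (0:ℝ) 1 := Ioc_subset_Ioc ha.1.le hk1
    have hfin : IsFiniteMeasure (volume.restrict (Ioc a k)) :=
      ⟨by rw [Measure.restrict_apply_univ]; exact measure_Ioc_lt_top⟩
    have hgnn : 0 ≤ᵐ[volume.restrict (Ioc a k)] g := by
      filter_upwards [ae_restrict_mem measurableSet_Ioc] with t ht
      exact hg_nonneg t (hsub ht)
    have hBnn : 0 ≤ᵐ[volume.restrict (Ioc a k)] fun t => B t ^ (p - 1) := by
      filter_upwards [ae_restrict_mem measurableSet_Ioc] with t ht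
      exact Real.rpow_nonneg (hB_nonneg t ⟨lt_trans ha.1 ht.1, ht.2⟩) _
    have hBq_mem : MemLp (fun t => B t ^ (p - 1)) (ENNReal.ofReal q)
        (volume.restrict (Ioc a k)) := by
      obtain ⟨C, hC⟩ := isCompact_Icc.exists_bound_of_continuousOn (hBp1_cont a ha)
      refine MemLp.of_bound ?_ C ?_
      · exact ((hBp1_cont a ha).aestronglyMeasurable measurableSet_Icc).mono_measure
          (Measure.restrict_mono Ioc_subset_Icc_self le_rfl)
      · filter_upwards [ae_restrict_mem measurableSet_Ioc] with t ht
        exact hC t (Ioc_subset_Icc_self ht)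
    have h := integral_mul_le_Lp_mul_Lq_of_nonneg hpq hgnn hBnn
      (hg_mem _ hsub measurableSet_Ioc) hBq_mem
    have hL : (∫ t in Ioc a k, g t * B t ^ (p - 1)) =
        ∫ t in Ioc a k, (B t ^ (p - 1) * g t) := by
      congr 1; funext t; ring
    have hR : (∫ t in Ioc a k, (B t ^ (p - 1)) ^ q) = ∫ t in Ioc a k, B t ^ p := by
      refine integral_congr_ae ?_
      filter_upwards [ae_restrict_mem measurableSet_Ioc] with t ht
      have hBt : 0 ≤ B t := hB_nonneg t ⟨lt_trans ha.1 ht.1, ht.2⟩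
      rw [← Real.rpow_mul hBt, show (p - 1) * q = p by rw [hq]; field_simp]
    rw [hL, hR, hq1] at h
    exact h
  -- monotone bounds
  have hgp_mono : ∀ a ∈ Ioo (0:ℝ) k,
      (∫ t in Ioc a k, g t ^ p) ≤ ∫ u in Ioc (0:ℝ) k, g u ^ p := by
    intro a ha
    refine setIntegral_mono_set (hg_p.mono_set (Ioc_subset_Ioc le_rfl hk1)) ?_
      ((Ioc_subset_Ioc ha.1.le le_rfl).eventuallyLE)
    filter_upwards [ae_restrict_mem measurableSet_Ioc] with t ht
    exact Real.rpow_nonneg (hg_nonneg t ⟨ht.1, ht.2.trans hk1⟩) _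
  have hJ_nonneg : ∀ a ∈ Ioo (0:ℝ) k, 0 ≤ ∫ t in Ioc a k, B t ^ p := by
    intro a ha
    apply setIntegral_nonneg measurableSet_Ioc
    intro t ht
    exact Real.rpow_nonneg (hB_nonneg t ⟨lt_trans ha.1 ht.1, ht.2⟩) _
  set Cg : ℝ := (∫ u in Ioc (0:ℝ) k, g u ^ p) ^ (1 / p) with hCg
  have hCg_nonneg : 0 ≤ Cg :=
    Real.rpow_nonneg (hgp_nonneg_int _ (Ioc_subset_Ioc le_rfl hk1) measurableSet_Ioc) _
  -- master inequality
  have hmain : ∀ a ∈ Ioo (0:ℝ) k, (p - 1) * (∫ t in Ioc a k, B t ^ p) ≤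
      p * (Cg * (∫ t in Ioc a k, B t ^ p) ^ ((p - 1) / p)) + φ a - φ k := by
    intro a ha
    have h1 := hFTC a ha
    have h2 := hHolder a ha
    have h3 : (∫ t in Ioc a k, g t ^ p) ^ (1 / p) ≤ Cg :=
      Real.rpow_le_rpow (hgp_nonneg_int _ (Ioc_subset_Ioc ha.1.le hk1) measurableSet_Ioc)
        (hgp_mono a ha) (by positivity)
    have hJe : 0 ≤ (∫ t in Ioc a k, B t ^ p) ^ ((p - 1) / p) :=
      Real.rpow_nonneg (hJ_nonneg a ha) _
    have h4 : (∫ t in Ioc a k, (B t ^ (p - 1) * g t)) ≤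
        Cg * (∫ t in Ioc a k, B t ^ p) ^ ((p - 1) / p) :=
      h2.trans (mul_le_mul_of_nonneg_right h3 hJe)
    have h5 := mul_le_mul_of_nonneg_left h4 hp0.le
    linarith
  -- exhausting sequence
  set an : ℕ → ℝ := fun n => k / (n + 2) with han
  have han_mem : ∀ n, an n ∈ Ioo (0:ℝ) k := by
    intro n
    constructor
    · have : (0:ℝ) < (n:ℝ) + 2 := by positivity
      exact div_pos hk0 this
    · rw [div_lt_iff₀ (by positivity)]
      nlinarith [hk0, (Nat.cast_nonneg n : (0:ℝ) ≤ n)]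
  have han_anti : ∀ m n : ℕ, m ≤ n → an n ≤ an m := by
    intro m n hmn
    apply div_le_div_of_nonneg_left hk0.le (by positivity)
    have : (m:ℝ) ≤ n := Nat.cast_le.2 hmn
    linarith
  have hsn_mono : Monotone (fun n => Ioc (an n) k) := by
    intro m n hmn
    exact Ioc_subset_Ioc_left (han_anti m n hmn)
  have hUnion : (⋃ n, Ioc (an n) k) = Ioc (0:ℝ) k := by
    apply Subset.antisymm
    · exact iUnion_subset fun n => Ioc_subset_Ioc_left (han_mem n).1.le
    · intro x hx
      obtain ⟨n, hn⟩ := exists_nat_gt (k / x)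
      refine mem_iUnion.2 ⟨n, mem_Ioc.2 ⟨?_, hx.2⟩⟩
      rw [div_lt_iff₀ (by positivity)]
      rw [div_lt_iff₀ hx.1] at hn
      nlinarith [hx.1]
  -- uniform bound and integrability on (0, k]
  have hgp1_nonneg : 0 ≤ ∫ u in Ioc (0:ℝ) 1, g u ^ p :=
    hgp_nonneg_int _ (subset_refl _) measurableSet_Ioc
  have hbound : ∀ n, (∫ t in Ioc (an n) k, B t ^ p) ≤
      max ((2 * (q * Cg)) ^ p) (2 * ((∫ u in Ioc (0:ℝ) 1, g u ^ p) / (p - 1))) := by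
    intro n
    have ha := han_mem n
    have ha1 : an n ≤ 1 := (ha.2.trans_le hk1).le
    have h1 := hmain (an n) ha
    have hφk0 : 0 ≤ φ k := hφ_nonneg k ⟨hk0, hk1⟩
    have hφa : φ (an n) ≤ ∫ u in Ioc (0:ℝ) 1, g u ^ p := by
      refine (hφ_bound (an n) ⟨ha.1, ha1⟩).trans ?_
      refine setIntegral_mono_set hg_p ?_ ((Ioc_subset_Ioc le_rfl ha1).eventuallyLE)
      filter_upwards [ae_restrict_mem measurableSet_Ioc] with t ht
      exact Real.rpow_nonneg (hg_nonneg t ht) _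
    set J : ℝ := ∫ t in Ioc (an n) k, B t ^ p with hJ
    set D : ℝ := ∫ u in Ioc (0:ℝ) 1, g u ^ p with hD
    have step : J ≤ (q * Cg) * J ^ ((p - 1) / p) + D / (p - 1) := by
      rw [← mul_le_mul_iff_right₀ hp1]
      have hrw : (p - 1) * ((q * Cg) * J ^ ((p - 1) / p) + D / (p - 1)) =
          p * (Cg * J ^ ((p - 1) / p)) + D := by
        rw [hq]; field_simp
      rw [hrw]
      linarith
    exact aux_self_bound hp (hJ_nonneg (an n) ha)
      (mul_nonneg (by rw [hq]; positivity) hCg_nonneg) (by positivity) step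
  have hI_int : IntegrableOn (fun t => B t ^ p) (Ioc (0:ℝ) k) := by
    have hBallcont : ContinuousOn (fun t => B t ^ p) (Ioc (0:ℝ) k) := by
      refine ContinuousOn.rpow_const ?_ (fun x _ => Or.inr hp0.le)
      refine ContinuousOn.mul ?_ (hF_cont.mono fun x hx => ⟨hx.1.le, hx.2.trans hk1⟩)
      intro x hx
      exact ((continuousAt_const.div continuousAt_id (ne_of_gt hx.1))).continuousWithinAt
    have haesm : AEStronglyMeasurable (fun t => B t ^ p) (volume.restrict (Ioc (0:ℝ) k)) :=
      hBallcont.aestronglyMeasurable measurableSet_Ioc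
    have hfin : HasFiniteIntegral (fun t => B t ^ p) (volume.restrict (Ioc (0:ℝ) k)) := by
      set M : ℝ := max ((2 * (q * Cg)) ^ p) (2 * ((∫ u in Ioc (0:ℝ) 1, g u ^ p) / (p - 1)))
        with hM
      set h : ℝ → ℝ≥0∞ := fun t => (‖B t ^ p‖₊ : ℝ≥0∞) with hh
      have haemeas : ∀ n : ℕ, AEMeasurable ((Ioc (an n) k).indicator h) volume := by
        intro n
        refine (aemeasurable_indicator_iff measurableSet_Ioc).2 ?_
        exact (haesm.mono_measure
          (Measure.restrict_mono (Ioc_subset_Ioc_left (han_mem n).1.le) le_rfl)).enorm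
      have hmono : ∀ x, Monotone fun n => (Ioc (an n) k).indicator h x := by
        intro x m n hmn
        exact Set.indicator_le_indicator_of_subset (hsn_mono hmn) (fun _ => zero_le) x
      have hsup : ∀ x, (⨆ n, (Ioc (an n) k).indicator h x) = (Ioc (0:ℝ) k).indicator h x := by
        intro x
        apply le_antisymm
        · refine iSup_le fun n => ?_
          exact Set.indicator_le_indicator_of_subset (Ioc_subset_Ioc_left (han_mem n).1.le)
            (fun _ => zero_le) x
        · by_cases hx : x ∈ Ioc (0:ℝ) k
          · obtain ⟨n, hxs⟩ := mem_iUnion.1 (by rw [hUnion]; exact hx)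
            rw [Set.indicator_of_mem hx]
            exact le_trans (le_of_eq (Set.indicator_of_mem hxs h).symm)
              (le_iSup (fun n => (Ioc (an n) k).indicator h x) n)
          · rw [Set.indicator_of_notMem hx]; exact zero_le
      have hcalc : (∫⁻ t in Ioc (0:ℝ) k, h t ∂volume)
          = ⨆ n, ∫⁻ t in Ioc (an n) k, h t ∂volume := by
        rw [← lintegral_indicator measurableSet_Ioc h]
        conv_lhs => rw [show (Ioc (0:ℝ) k).indicator h
          = fun x => ⨆ n, (Ioc (an n) k).indicator h x from funext fun x => (hsup x).symm]
        rw [lintegral_iSup' haemeas (ae_of_all _ hmono)]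
        refine iSup_congr fun n => ?_
        rw [lintegral_indicator measurableSet_Ioc h]
      have hterm : ∀ n, (∫⁻ t in Ioc (an n) k, h t ∂volume) ≤ ENNReal.ofReal M := by
        intro n
        have hint := hBp_int (an n) (han_mem n)
        have hnn : 0 ≤ᵐ[volume.restrict (Ioc (an n) k)] fun t => B t ^ p := by
          filter_upwards [ae_restrict_mem measurableSet_Ioc] with t ht
          exact Real.rpow_nonneg (hB_nonneg t ⟨lt_trans (han_mem n).1 ht.1, ht.2⟩) _
        have heq1 : (∫⁻ t in Ioc (an n) k, h t ∂volume)
            = ∫⁻ t in Ioc (an n) k, ENNReal.ofReal (B t ^ p) ∂volume := by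
          refine lintegral_congr_ae ?_
          filter_upwards [hnn] with t ht
          exact Real.enorm_eq_ofReal ht
        rw [heq1, ← ofReal_integral_eq_lintegral_ofReal hint hnn]
        exact ENNReal.ofReal_le_ofReal (hbound n)
      have : (∫⁻ t in Ioc (0:ℝ) k, h t ∂volume) < ⊤ :=
        lt_of_le_of_lt (hcalc ▸ iSup_le hterm) ENNReal.ofReal_lt_top
      exact this
    exact ⟨haesm, hfin⟩
  -- the limit argument
  set I : ℝ := ∫ t in Ioc (0:ℝ) k, B t ^ p with hI
  have hI_nonneg : 0 ≤ I := by
    apply setIntegral_nonneg measurableSet_Ioc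
    intro t ht
    exact Real.rpow_nonneg (hB_nonneg t ht) _
  have hBpnn_ae : 0 ≤ᵐ[volume.restrict (Ioc (0:ℝ) k)] fun t => B t ^ p := by
    filter_upwards [ae_restrict_mem measurableSet_Ioc] with t ht
    exact Real.rpow_nonneg (hB_nonneg t ht) _
  have hJ_le_I : ∀ a ∈ Ioo (0:ℝ) k, (∫ t in Ioc a k, B t ^ p) ≤ I := by
    intro a ha
    exact setIntegral_mono_set hI_int hBpnn_ae ((Ioc_subset_Ioc_left ha.1.le).eventuallyLE)
  have hJten : Tendsto (fun n => ∫ t in Ioc (an n) k, B t ^ p) atTop (nhds I) := by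
    have h := tendsto_setIntegral_of_monotone (fun n : ℕ => measurableSet_Ioc) hsn_mono
      (by rw [hUnion]; exact hI_int)
    rwa [hUnion] at h
  have hRten : Tendsto (fun n => ∫ u in Ioc (0:ℝ) (an n), g u ^ p) atTop (nhds 0) := by
    have hanti : Antitone fun n : ℕ => Ioc (0:ℝ) (an n) :=
      fun m n hmn => Ioc_subset_Ioc_right (han_anti m n hmn)
    have hiInter : (⋂ n, Ioc (0:ℝ) (an n)) = ∅ := by
      rw [eq_empty_iff_forall_notMem]
      intro x hx
      have hx0 : 0 < x := (mem_iInter.1 hx 0).1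
      obtain ⟨n, hn⟩ := exists_nat_gt (k / x)
      have hxan : x ≤ an n := (mem_iInter.1 hx n).2
      rw [div_lt_iff₀ hx0] at hn
      have hlt : an n < x := by
        rw [han]
        simp only []
        rw [div_lt_iff₀ (by positivity)]
        nlinarith
      linarith
    have h := tendsto_setIntegral_of_antitone (fun n : ℕ => measurableSet_Ioc) hanti
      ⟨0, hg_p.mono_set (Ioc_subset_Ioc le_rfl ((han_mem 0).2.le.trans hk1))⟩
    rw [hiInter] at h
    simpa using h
  have hφten : Tendsto (fun n => φ (an n)) atTop (nhds 0) :=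
    squeeze_zero (fun n => hφ_nonneg (an n) ⟨(han_mem n).1, (han_mem n).2.le.trans hk1⟩)
      (fun n => hφ_bound (an n) ⟨(han_mem n).1, (han_mem n).2.le.trans hk1⟩) hRten
  have hfinal : (p - 1) * I ≤ p * (Cg * I ^ ((p - 1) / p)) - φ k := by
    have hL : Tendsto (fun n => (p - 1) * ∫ t in Ioc (an n) k, B t ^ p) atTop
        (nhds ((p - 1) * I)) := hJten.const_mul _
    have hR : Tendsto (fun n => p * (Cg * I ^ ((p - 1) / p)) + φ (an n) - φ k) atTop
        (nhds (p * (Cg * I ^ ((p - 1) / p)) + 0 - φ k)) :=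
      (tendsto_const_nhds.add hφten).sub tendsto_const_nhds
    have key : (p - 1) * I ≤ p * (Cg * I ^ ((p - 1) / p)) + 0 - φ k := by
      refine le_of_tendsto_of_tendsto' hL hR fun n => ?_
      have h1 := hmain (an n) (han_mem n)
      have h2 : (∫ t in Ioc (an n) k, B t ^ p) ^ ((p - 1) / p) ≤ I ^ ((p - 1) / p) :=
        Real.rpow_le_rpow (hJ_nonneg (an n) (han_mem n)) (hJ_le_I (an n) (han_mem n))
          (by positivity)
      have h3 : Cg * (∫ t in Ioc (an n) k, B t ^ p) ^ ((p - 1) / p)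
          ≤ Cg * I ^ ((p - 1) / p) := mul_le_mul_of_nonneg_left h2 hCg_nonneg
      have h4 := mul_le_mul_of_nonneg_left h3 hp0.le
      linarith
    linarith
  -- algebra
  have hφk : φ k = k ^ (1 - p) * F k ^ p := rfl
  have hFk : F k = ∫ u in Set.Ioc (0:ℝ) k, g u := rfl
  rw [← hFk]
  calc I ≤ (p * (Cg * I ^ ((p - 1) / p)) - φ k) / (p - 1) := by
        rw [le_div_iff₀ hp1]; linarith
    _ = -(1 / (p - 1)) * k ^ (1 - p) * F k ^ p +
        q * Cg * I ^ ((p - 1) / p) := by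
        rw [hφk, hq]; field_simp; ring
end

section
/- Let p > 1 and let ω_p be the inverse of H_p(z) = -(p-1)z^p + p z^{p-1} on [1, p/(p-1)]. Let g : (0,1] → ℝ≥0 be non-increasing with ∫_0^1 g^p < ∞, and 0 < k ≤ 1 with ∫_0^k g > 0. Then ∫_0^k (t^{-1} ∫_0^t g(u) du)^p dt ≤ (∫_0^k g^p) · ω_p( (∫_0^k g)^p / (k^{p-1} ∫_0^k g^p) )^p. -/
open Set MeasureTheory Filter Real Topology
open scoped ENNReal

private lemma memLp_of_int_rpow {p : ℝ} (hp : 0 < p) {μ : Measure ℝ}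
    {f : ℝ → ℝ} (hm : AEStronglyMeasurable f μ) (hnn : 0 ≤ᵐ[μ] f)
    (hint : Integrable (fun x => f x ^ p) μ) :
    MemLp f (ENNReal.ofReal p) μ := by
  have A : ENNReal.ofReal p ≠ 0 := by rwa [Ne, ENNReal.ofReal_eq_zero, not_le]
  have B : ENNReal.ofReal p ≠ ∞ := ENNReal.ofReal_ne_top
  rw [← memLp_norm_rpow_iff hm A B, ENNReal.toReal_ofReal hp.le, ENNReal.div_self A B,
    memLp_one_iff_integrable]
  apply hint.congr
  filter_upwards [hnn] with x hx
  rw [Real.norm_of_nonneg hx]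

private lemma setIntegral_mul_le_holder {p q : ℝ} (hpq : Real.HolderConjugate p q) {s : Set ℝ}
    {f h : ℝ → ℝ}
    (hfm : AEStronglyMeasurable f (volume.restrict s))
    (hhm : AEStronglyMeasurable h (volume.restrict s))
    (hfnn : 0 ≤ᵐ[volume.restrict s] f) (hhnn : 0 ≤ᵐ[volume.restrict s] h)
    (hfp : IntegrableOn (fun x => f x ^ p) s) (hhq : IntegrableOn (fun x => h x ^ q) s) :
    ∫ x in s, f x * h x ≤ (∫ x in s, f x ^ p) ^ (1/p) * (∫ x in s, h x ^ q) ^ (1/q) :=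
  MeasureTheory.integral_mul_le_Lp_mul_Lq_of_nonneg hpq hfnn hhnn
    (memLp_of_int_rpow hpq.pos hfm hfnn hfp)
    (memLp_of_int_rpow hpq.symm.pos hhm hhnn hhq)

private lemma holder_pow_aux {p : ℝ} (hp : 1 < p) {g : ℝ → ℝ} {c : ℝ} (hc : 0 < c)
    (hgm : AEStronglyMeasurable g (volume.restrict (Ioc 0 c)))
    (hgnn : 0 ≤ᵐ[volume.restrict (Ioc 0 c)] g)
    (hgp : IntegrableOn (fun u => g u ^ p) (Ioc 0 c)) :
    (∫ u in Ioc (0:ℝ) c, g u) ^ p ≤ c ^ (p - 1) * ∫ u in Ioc (0:ℝ) c, g u ^ p := by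
  have hpq := Real.HolderConjugate.conjExponent hp
  have hone : IntegrableOn (fun _ : ℝ => (1:ℝ) ^ (p / (p-1))) (Ioc (0:ℝ) c) := by
    simp only [Real.one_rpow]
    exact integrableOn_const measure_Ioc_lt_top.ne
  have key := setIntegral_mul_le_holder hpq hgm aestronglyMeasurable_const hgnn
    (Eventually.of_forall fun _ => zero_le_one) hgp hone
  simp only [mul_one, Real.one_rpow, MeasureTheory.integral_const, smul_eq_mul,
    Real.conjExponent] at key
  rw [measureReal_restrict_apply_univ, Real.volume_real_Ioc, sub_zero,
    max_eq_left hc.le] at key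
  have hGnn : 0 ≤ ∫ u in Ioc (0:ℝ) c, g u ^ p := by
    refine integral_nonneg_of_ae ?_
    filter_upwards [hgnn] with x hx
    exact Real.rpow_nonneg hx p
  have h2 : (∫ u in Ioc (0:ℝ) c, g u) ^ p ≤
      ((∫ u in Ioc (0:ℝ) c, g u ^ p) ^ (1/p) * c ^ (1 / (p/(p-1)))) ^ p := by
    refine Real.rpow_le_rpow ?_ key (by positivity)
    exact integral_nonneg_of_ae hgnn
  calc (∫ u in Ioc (0:ℝ) c, g u) ^ p ≤ _ := h2
    _ = c ^ (p - 1) * ∫ u in Ioc (0:ℝ) c, g u ^ p := by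
        have e2 : 1 / (p/(p-1)) * p = p - 1 := by
          field_simp
        rw [Real.mul_rpow (by positivity) (by positivity), ← Real.rpow_mul hGnn,
          ← Real.rpow_mul hc.le, one_div_mul_cancel (by positivity : p ≠ 0), Real.rpow_one, e2]
        ring

set_option maxHeartbeats 3000000 in
/-- Inequality (3.8): `∫₀ᵏ (t⁻¹∫₀ᵗ g)^p dt ≤ (∫₀ᵏ g^p) ω_p((∫₀ᵏ g)^p/(k^{p-1}∫₀ᵏ g^p))^p`. -/
theorem avg_pow_integral_le_omega (p : ℝ) (hp : 1 < p) (ω : ℝ → ℝ)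
    (hω : ∀ x ∈ Set.Icc (0:ℝ) 1, ω x ∈ Set.Icc 1 (p / (p - 1)) ∧
      -(p - 1) * ω x ^ p + p * ω x ^ (p - 1) = x)
    (g : ℝ → ℝ) (hg_nonneg : ∀ t ∈ Set.Ioc (0:ℝ) 1, 0 ≤ g t)
    (hg_anti : AntitoneOn g (Set.Ioc 0 1))
    (hg_p : IntegrableOn (fun u => g u ^ p) (Set.Ioc 0 1))
    (k : ℝ) (hk : k ∈ Set.Ioc (0:ℝ) 1)
    (hpos : 0 < ∫ u in Set.Ioc (0:ℝ) k, g u) :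
    ∫ t in Set.Ioc (0:ℝ) k, ((1 / t) * ∫ u in Set.Ioc (0:ℝ) t, g u) ^ p ≤
      (∫ u in Set.Ioc (0:ℝ) k, g u ^ p) *
        ω ((∫ u in Set.Ioc (0:ℝ) k, g u) ^ p /
            (k ^ (p - 1) * ∫ u in Set.Ioc (0:ℝ) k, g u ^ p)) ^ p := by
  obtain ⟨hk0, hk1⟩ := hk
  have hp0 : (0:ℝ) < p := by linarith
  have hp1 : (0:ℝ) < p - 1 := by linarith
  have hsub : Ioc (0:ℝ) k ⊆ Ioc 0 1 := Ioc_subset_Ioc le_rfl hk1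
  -- measurability of g
  have hgm1 : AEStronglyMeasurable g (volume.restrict (Ioc (0:ℝ) 1)) :=
    (aemeasurable_restrict_of_antitoneOn measurableSet_Ioc hg_anti).aestronglyMeasurable
  have hgm : ∀ s : Set ℝ, s ⊆ Ioc (0:ℝ) 1 → AEStronglyMeasurable g (volume.restrict s) :=
    fun s hs => hgm1.mono_measure (Measure.restrict_mono hs le_rfl)
  have hgnn : ∀ s : Set ℝ, MeasurableSet s → s ⊆ Ioc (0:ℝ) 1 →
      0 ≤ᵐ[volume.restrict s] g := fun s hms hs =>
    (ae_restrict_iff' hms).mpr (Eventually.of_forall fun x hx => hg_nonneg x (hs hx))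
  -- integrability of g
  have hg_int : IntegrableOn g (Ioc (0:ℝ) 1) := by
    have h1 : IntegrableOn (fun u => 1 + g u ^ p) (Ioc (0:ℝ) 1) :=
      (integrableOn_const measure_Ioc_lt_top.ne).add hg_p
    refine Integrable.mono h1 (hgm _ subset_rfl) ?_
    rw [ae_restrict_iff' measurableSet_Ioc]
    refine Eventually.of_forall fun x hx => ?_
    have h0 := hg_nonneg x hx
    have h2 : (0:ℝ) ≤ g x ^ p := Real.rpow_nonneg h0 p
    rw [Real.norm_of_nonneg h0, Real.norm_of_nonneg (by linarith)]
    rcases le_total (g x) 1 with h|h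
    · linarith
    · have h3 := Real.rpow_le_rpow_of_exponent_le h hp.le
      rw [Real.rpow_one] at h3; linarith
  -- the primitive F
  set F : ℝ → ℝ := fun t => ∫ u in Ioc (0:ℝ) t, g u with hFdef
  have hFnn : ∀ t, t ≤ 1 → 0 ≤ F t := fun t ht =>
    setIntegral_nonneg measurableSet_Ioc fun x hx => hg_nonneg x ⟨hx.1, hx.2.trans ht⟩
  have hFcont : ContinuousOn F (Icc 0 1) :=
    intervalIntegral.continuousOn_primitive ((integrableOn_Icc_iff_integrableOn_Ioc).mpr hg_int)
  clear_value F
  -- main quantities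
  set G := ∫ u in Ioc (0:ℝ) k, g u ^ p with hGdef
  set Fk := ∫ u in Ioc (0:ℝ) k, g u with hFkdef
  have hGnn : 0 ≤ G := integral_nonneg_of_ae (by
    filter_upwards [hgnn _ measurableSet_Ioc hsub] with x hx using Real.rpow_nonneg hx p)
  have hFkG : Fk ^ p ≤ k ^ (p - 1) * G :=
    holder_pow_aux hp hk0 (hgm _ hsub) (hgnn _ measurableSet_Ioc hsub) (hg_p.mono_set hsub)
  have hkp : (0:ℝ) < k ^ (p-1) := Real.rpow_pos_of_pos hk0 _
  have hGpos : 0 < G := by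
    rcases eq_or_lt_of_le hGnn with h|h
    · exfalso
      have := Real.rpow_pos_of_pos hpos p
      rw [← h] at hFkG; nlinarith
    · exact h
  clear_value G Fk
  set x₀ := Fk ^ p / (k ^ (p - 1) * G) with hx₀def
  have hx₀mem : x₀ ∈ Icc (0:ℝ) 1 := by
    constructor
    · exact div_nonneg (Real.rpow_nonneg hpos.le p) (by positivity)
    · rw [hx₀def, div_le_one (by positivity)]; exact hFkG
  clear_value x₀
  obtain ⟨hωmem, hωeq⟩ := hω x₀ hx₀mem
  have hω1 : 1 ≤ ω x₀ := hωmem.1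
  have hωnn : 0 ≤ ω x₀ := by linarith
  by_cases hI : IntegrableOn (fun t => ((1 / t) * F t) ^ p) (Ioc (0:ℝ) k)
  swap
  · rw [integral_undef (by simpa only [hFdef, IntegrableOn] using hI)]
    exact mul_nonneg hGnn (Real.rpow_nonneg hωnn p)
  rw [show (∫ t in Ioc (0:ℝ) k, ((1 / t) * ∫ u in Ioc (0:ℝ) t, g u) ^ p)
      = ∫ t in Ioc (0:ℝ) k, ((1 / t) * F t) ^ p by simp only [hFdef]]
  set I := ∫ t in Ioc (0:ℝ) k, ((1 / t) * F t) ^ p with hIdef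
  show I ≤ G * ω x₀ ^ p
  have hΦnn : 0 ≤ᵐ[volume.restrict (Ioc (0:ℝ) k)] fun t => ((1/t) * F t)^p :=
    (ae_restrict_iff' measurableSet_Ioc).mpr (Eventually.of_forall fun t ht =>
      Real.rpow_nonneg (mul_nonneg (one_div_nonneg.mpr ht.1.le) (hFnn t (ht.2.trans hk1))) p)
  have hInn : 0 ≤ I := integral_nonneg_of_ae hΦnn
  clear_value I
  -- the per-ε inequality (integration by parts + Hölder)
  have step : ∀ ε : ℝ, 0 < ε → ε < k →
      x₀ * G ≤ p * I ^ ((p-1)/p) * G ^ (1/p)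
        - (p-1) * (∫ t in Ioc ε k, ((1/t) * F t) ^ p)
        + (G - ∫ t in Ioc ε k, g t ^ p) := by
    intro ε hε hεk
    have hεk' : ε ≤ k := hεk.le
    have hε1 : ε < 1 := lt_of_lt_of_le hεk hk1
    have hIccsub : Icc ε k ⊆ Ioc (0:ℝ) 1 := fun x hx => ⟨lt_of_lt_of_le hε hx.1, hx.2.trans hk1⟩
    have hIocsub : Ioc ε k ⊆ Ioc (0:ℝ) 1 := fun x hx => ⟨lt_trans hε hx.1, hx.2.trans hk1⟩
    have hFcontA : ContinuousOn F (Icc ε k) := hFcont.mono (Icc_subset_Icc hε.le hk1)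
    have htne : ∀ x ∈ Icc ε k, x ≠ 0 := fun x hx => (lt_of_lt_of_le hε hx.1).ne'
    have hc1 : ContinuousOn (fun t => F t ^ (p-1) * t ^ (1-p)) (Icc ε k) :=
      (hFcontA.rpow_const fun x _ => Or.inr hp1.le).mul
        (ContinuousOn.rpow_const continuousOn_id fun x hx => Or.inl (htne x hx))
    have hc2 : ContinuousOn (fun t => F t ^ p * t ^ (-p)) (Icc ε k) :=
      (hFcontA.rpow_const fun x _ => Or.inr hp0.le).mul
        (ContinuousOn.rpow_const continuousOn_id fun x hx => Or.inl (htne x hx))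
    have hφcont : ContinuousOn (fun t => F t ^ p * t ^ (1-p)) (Icc ε k) :=
      (hFcontA.rpow_const fun x _ => Or.inr hp0.le).mul
        (ContinuousOn.rpow_const continuousOn_id fun x hx => Or.inl (htne x hx))
    have hgiA : IntegrableOn g (Icc ε k) := hg_int.mono_set hIccsub
    have hψ1int : IntegrableOn (fun t => (F t ^ (p-1) * t ^ (1-p)) * g t) (Icc ε k) := by
      obtain ⟨C, hC⟩ := IsCompact.exists_bound_of_continuousOn isCompact_Icc hc1
      refine Integrable.bdd_mul (c := C) hgiA
        (hc1.aestronglyMeasurable measurableSet_Icc) ?_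
      rw [ae_restrict_iff' measurableSet_Icc]
      exact Eventually.of_forall fun x hx => hC x hx
    have hψ2int : IntegrableOn (fun t => F t ^ p * t ^ (-p)) (Icc ε k) :=
      hc2.integrableOn_Icc
    have hψint : IntegrableOn
        (fun t => p * ((F t ^ (p-1) * t ^ (1-p)) * g t) - (p-1) * (F t ^ p * t ^ (-p)))
        (Icc ε k) := ((hψ1int.const_mul p).sub (hψ2int.const_mul (p-1)) :)
    -- the right derivative of φ
    have hD : ∀ x ∈ Ioo ε k,
        HasDerivWithinAt (fun t => F t ^ p * t ^ (1-p))
          ((p * F x ^ (p-1) * sSup (g '' Ioc x 1)) * x ^ (1-p)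
            + F x ^ p * ((1-p) * x ^ (1-p-1))) (Ioi x) x := by
      intro x hx
      have hx0 : 0 < x := lt_trans hε hx.1
      have hx1 : x < 1 := lt_of_lt_of_le hx.2 hk1
      have hFder : HasDerivWithinAt F (sSup (g '' Ioc x 1)) (Ioi x) x := by
        have hne : (g '' Ioc x 1).Nonempty := ⟨g 1, mem_image_of_mem g ⟨hx1, le_rfl⟩⟩
        have hbdd : BddAbove (g '' Ioc x 1) := by
          refine ⟨g x, ?_⟩
          rintro y ⟨t, ht, rfl⟩
          exact hg_anti ⟨hx0, hx1.le⟩ ⟨lt_trans hx0 ht.1, ht.2⟩ ht.1.le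
        have htend : Tendsto g (𝓝[>] x) (𝓝 (sSup (g '' Ioc x 1))) := by
          rw [tendsto_order]
          constructor
          · intro b hb
            obtain ⟨y, ⟨t₀, ht₀, rfl⟩, hby⟩ := exists_lt_of_lt_csSup hne hb
            filter_upwards [Ioo_mem_nhdsGT_of_mem (Set.mem_Ico.mpr ⟨le_rfl, ht₀.1⟩)] with u hu
            exact lt_of_lt_of_le hby
              (hg_anti ⟨lt_trans hx0 hu.1, hu.2.le.trans ht₀.2⟩
                ⟨lt_trans hx0 ht₀.1, ht₀.2⟩ hu.2.le)
          · intro b hb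
            filter_upwards [Ioc_mem_nhdsGT_of_mem (Set.mem_Ico.mpr ⟨le_rfl, hx1⟩)] with u hu
            exact lt_of_le_of_lt (le_csSup hbdd (mem_image_of_mem g hu)) hb
        have hii : IntervalIntegrable g volume 0 x := by
          rw [intervalIntegrable_iff_integrableOn_Ioc_of_le hx0.le]
          exact hg_int.mono_set (Ioc_subset_Ioc le_rfl hx1.le)
        have hmeas : StronglyMeasurableAtFilter g (𝓝[>] x) volume :=
          ⟨Ioc x 1, Ioc_mem_nhdsGT_of_mem (Set.mem_Ico.mpr ⟨le_rfl, hx1⟩),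
            hgm _ (Ioc_subset_Ioc hx0.le le_rfl)⟩
        have hd0 : HasDerivWithinAt (fun u => ∫ t in (0:ℝ)..u, g t)
            (sSup (g '' Ioc x 1)) (Ici x) x :=
          intervalIntegral.integral_hasDerivWithinAt_of_tendsto_ae_right hii hmeas
            (htend.mono_left inf_le_left)
        refine (hd0.mono Ioi_subset_Ici_self).congr_of_eventuallyEq ?_ ?_
        · filter_upwards [Ioc_mem_nhdsGT_of_mem (Set.mem_Ico.mpr ⟨le_rfl, hx1⟩)] with u hu
          rw [hFdef]
          exact (intervalIntegral.integral_of_le (lt_trans hx0 hu.1).le).symm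
        · rw [hFdef]
          exact (intervalIntegral.integral_of_le hx0.le).symm
      have hA : HasDerivWithinAt (fun t => F t ^ p)
          (p * F x ^ (p-1) * sSup (g '' Ioc x 1)) (Ioi x) x :=
        (Real.hasDerivAt_rpow_const (x := F x) (p := p)
          (Or.inr hp.le)).comp_hasDerivWithinAt x hFder
      have hB : HasDerivAt (fun t : ℝ => t ^ (1-p)) ((1-p) * x ^ (1-p-1)) x :=
        Real.hasDerivAt_rpow_const (Or.inl hx0.ne')
      exact hA.mul hB.hasDerivWithinAt
    -- bound the derivative by ψ
    have hDle : ∀ x ∈ Ioo ε k,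
        (p * F x ^ (p-1) * sSup (g '' Ioc x 1)) * x ^ (1-p) + F x ^ p * ((1-p) * x ^ (1-p-1))
          ≤ p * ((F x ^ (p-1) * x ^ (1-p)) * g x) - (p-1) * (F x ^ p * x ^ (-p)) := by
      intro x hx
      have hx0 : 0 < x := lt_trans hε hx.1
      have hx1 : x < 1 := lt_of_lt_of_le hx.2 hk1
      have hsup : sSup (g '' Ioc x 1) ≤ g x := by
        refine csSup_le ⟨g 1, mem_image_of_mem g ⟨hx1, le_rfl⟩⟩ ?_
        rintro y ⟨t, ht, rfl⟩
        exact hg_anti ⟨hx0, hx1.le⟩ ⟨lt_trans hx0 ht.1, ht.2⟩ ht.1.le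
      rw [show (1:ℝ)-p-1 = -p by ring]
      have hcoef : 0 ≤ p * F x ^ (p-1) * x ^ (1-p) :=
        mul_nonneg (mul_nonneg hp0.le (Real.rpow_nonneg (hFnn x (hx.2.le.trans hk1)) _))
          (Real.rpow_nonneg hx0.le _)
      have h3 : (p * F x ^ (p-1) * sSup (g '' Ioc x 1)) * x ^ (1-p)
          ≤ p * ((F x ^ (p-1) * x ^ (1-p)) * g x) := by
        calc (p * F x ^ (p-1) * sSup (g '' Ioc x 1)) * x ^ (1-p)
            = (p * F x ^ (p-1) * x ^ (1-p)) * sSup (g '' Ioc x 1) := by ring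
          _ ≤ (p * F x ^ (p-1) * x ^ (1-p)) * g x := mul_le_mul_of_nonneg_left hsup hcoef
          _ = p * ((F x ^ (p-1) * x ^ (1-p)) * g x) := by ring
      nlinarith [h3]
    -- fundamental theorem of calculus (one-sided, inequality version)
    have ftc := intervalIntegral.sub_le_integral_of_hasDeriv_right_of_le hεk' hφcont hD hψint hDle
    rw [intervalIntegral.integral_of_le hεk'] at ftc
    have hsplit : (∫ t in Ioc ε k,
          (p * ((F t ^ (p-1) * t ^ (1-p)) * g t) - (p-1) * (F t ^ p * t ^ (-p))))
        = p * (∫ t in Ioc ε k, (F t ^ (p-1) * t ^ (1-p)) * g t)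
          - (p-1) * ∫ t in Ioc ε k, F t ^ p * t ^ (-p) := by
      rw [integral_sub ((hψ1int.mono_set Ioc_subset_Icc_self).const_mul p)
        ((hψ2int.mono_set Ioc_subset_Icc_self).const_mul (p-1)),
        integral_const_mul, integral_const_mul]
    have hIεeq : (∫ t in Ioc ε k, F t ^ p * t ^ (-p)) = ∫ t in Ioc ε k, ((1/t) * F t) ^ p := by
      refine setIntegral_congr_fun measurableSet_Ioc fun t ht => ?_
      have ht0 : 0 < t := lt_trans hε ht.1
      have hFt : 0 ≤ F t := hFnn t (ht.2.trans hk1)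
      rw [Real.mul_rpow (one_div_nonneg.mpr ht0.le) hFt, one_div, Real.inv_rpow ht0.le,
        ← Real.rpow_neg ht0.le]
      ring
    rw [hsplit, hIεeq] at ftc
    -- Hölder for the middle term
    have hq : (Real.conjExponent p).HolderConjugate p := (Real.HolderConjugate.conjExponent hp).symm
    have hf1contOn : ContinuousOn (fun t => ((1/t) * F t) ^ (p-1)) (Icc ε k) := by
      refine ContinuousOn.rpow_const ?_ fun x _ => Or.inr hp1.le
      exact (continuousOn_const.div continuousOn_id fun x hx => htne x hx).mul hFcontA
    have hf1m : AEStronglyMeasurable (fun t => ((1/t) * F t) ^ (p-1))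
        (volume.restrict (Ioc ε k)) :=
      (hf1contOn.mono Ioc_subset_Icc_self).aestronglyMeasurable measurableSet_Ioc
    have hf1nn : 0 ≤ᵐ[volume.restrict (Ioc ε k)] fun t => ((1/t) * F t) ^ (p-1) :=
      (ae_restrict_iff' measurableSet_Ioc).mpr (Eventually.of_forall fun t ht =>
        Real.rpow_nonneg (mul_nonneg (one_div_nonneg.mpr (lt_trans hε ht.1).le)
          (hFnn t (ht.2.trans hk1))) _)
    have hEq : EqOn (fun t => ((1/t) * F t) ^ p)
        (fun t => (((1/t) * F t) ^ (p-1)) ^ (Real.conjExponent p)) (Ioc ε k) := by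
      intro t ht
      have hbn : 0 ≤ (1/t) * F t :=
        mul_nonneg (one_div_nonneg.mpr (lt_trans hε ht.1).le) (hFnn t (ht.2.trans hk1))
      show ((1/t) * F t) ^ p = (((1/t) * F t) ^ (p-1)) ^ (Real.conjExponent p)
      rw [← Real.rpow_mul hbn, Real.conjExponent,
        show (p-1) * (p / (p-1)) = p by field_simp]
    have hf1q : IntegrableOn
        (fun t => (((1/t) * F t) ^ (p-1)) ^ (Real.conjExponent p)) (Ioc ε k) :=
      IntegrableOn.congr_fun (hI.mono_set (Ioc_subset_Ioc hε.le le_rfl)) hEq measurableSet_Ioc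
    have hgp_εk : IntegrableOn (fun t => g t ^ p) (Ioc ε k) := hg_p.mono_set hIocsub
    have hold := setIntegral_mul_le_holder hq hf1m (hgm _ hIocsub) hf1nn
      (hgnn _ measurableSet_Ioc hIocsub) hf1q hgp_εk
    have hJeq : (∫ t in Ioc ε k, (F t ^ (p-1) * t ^ (1-p)) * g t)
        = ∫ t in Ioc ε k, (((1/t) * F t) ^ (p-1)) * g t := by
      refine setIntegral_congr_fun measurableSet_Ioc fun t ht => ?_
      have ht0 : 0 < t := lt_trans hε ht.1
      have hFt : 0 ≤ F t := hFnn t (ht.2.trans hk1)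
      rw [Real.mul_rpow (one_div_nonneg.mpr ht0.le) hFt, one_div, Real.inv_rpow ht0.le,
        ← Real.rpow_neg ht0.le, show -(p-1) = 1-p by ring]
      ring
    have hf1qInt : (∫ t in Ioc ε k, (((1/t) * F t) ^ (p-1)) ^ (Real.conjExponent p))
        = ∫ t in Ioc ε k, ((1/t) * F t) ^ p :=
      (setIntegral_congr_fun measurableSet_Ioc hEq).symm
    have hcq : 1 / Real.conjExponent p = (p-1)/p := by
      rw [Real.conjExponent, one_div_div]
    have hΦnn' : 0 ≤ᵐ[volume.restrict (Ioc ε k)] fun t => ((1/t) * F t) ^ p :=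
      (ae_restrict_iff' measurableSet_Ioc).mpr (Eventually.of_forall fun t ht =>
        Real.rpow_nonneg (mul_nonneg (one_div_nonneg.mpr (lt_trans hε ht.1).le)
          (hFnn t (ht.2.trans hk1))) p)
    have hIεnn : 0 ≤ ∫ t in Ioc ε k, ((1/t) * F t) ^ p := integral_nonneg_of_ae hΦnn'
    have hGεnn : 0 ≤ ∫ t in Ioc ε k, g t ^ p := integral_nonneg_of_ae <| by
      filter_upwards [hgnn _ measurableSet_Ioc hIocsub] with t ht using Real.rpow_nonneg ht p
    have hIεle : (∫ t in Ioc ε k, ((1/t) * F t) ^ p) ≤ I := by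
      rw [hIdef]
      exact setIntegral_mono_set hI hΦnn
        (HasSubset.Subset.eventuallyLE (Ioc_subset_Ioc hε.le le_rfl))
    have hGεle : (∫ t in Ioc ε k, g t ^ p) ≤ G := by
      rw [hGdef]
      refine setIntegral_mono_set (hg_p.mono_set hsub) ?_
        (HasSubset.Subset.eventuallyLE (Ioc_subset_Ioc hε.le le_rfl))
      filter_upwards [hgnn _ measurableSet_Ioc hsub] with t ht using Real.rpow_nonneg ht p
    have hJle : (∫ t in Ioc ε k, (F t ^ (p-1) * t ^ (1-p)) * g t)
        ≤ I ^ ((p-1)/p) * G ^ (1/p) := by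
      rw [hJeq]
      refine le_trans hold ?_
      rw [hf1qInt, hcq]
      refine mul_le_mul (Real.rpow_le_rpow hIεnn hIεle (by positivity))
        (Real.rpow_le_rpow hGεnn hGεle (by positivity))
        (Real.rpow_nonneg hGεnn _) (Real.rpow_nonneg hInn _)
    -- bound φ(ε) by the tail integral of g^p
    have hφε : F ε ^ p * ε ^ (1-p) ≤ ∫ t in Ioc (0:ℝ) ε, g t ^ p := by
      have h9 := holder_pow_aux hp hε (hgm _ (Ioc_subset_Ioc le_rfl hε1.le))
        (hgnn _ measurableSet_Ioc (Ioc_subset_Ioc le_rfl hε1.le))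
        (hg_p.mono_set (Ioc_subset_Ioc le_rfl hε1.le))
      have hFε : F ε = ∫ u in Ioc (0:ℝ) ε, g u := by rw [hFdef]
      have he1 : ε ^ (p-1) * ε ^ (1-p) = 1 := by
        rw [← Real.rpow_add hε]; norm_num
      have h10 : F ε ^ p * ε ^ (1-p) ≤ (ε ^ (p-1) * ∫ u in Ioc (0:ℝ) ε, g u ^ p) * ε ^ (1-p) := by
        rw [hFε]; exact mul_le_mul_of_nonneg_right h9 (Real.rpow_nonneg hε.le _)
      calc F ε ^ p * ε ^ (1-p) ≤ _ := h10
        _ = (∫ u in Ioc (0:ℝ) ε, g u ^ p) * (ε ^ (p-1) * ε ^ (1-p)) := by ring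
        _ = _ := by rw [he1, mul_one]
    have hTsplit : (∫ t in Ioc (0:ℝ) ε, g t ^ p) = G - ∫ t in Ioc ε k, g t ^ p := by
      have hun := setIntegral_union (μ := volume) (f := fun t => g t ^ p)
        (Ioc_disjoint_Ioc_of_le le_rfl) measurableSet_Ioc
        (hg_p.mono_set (Ioc_subset_Ioc le_rfl hε1.le)) (hg_p.mono_set hIocsub)
      rw [Ioc_union_Ioc_eq_Ioc hε.le hεk'] at hun
      rw [hGdef, hun]; ring
    -- φ(k) = x₀ * G
    have hφk : F k ^ p * k ^ (1-p) = x₀ * G := by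
      have hFkF : Fk = F k := by rw [hFkdef, hFdef]
      have he1 : k ^ (1-p) * k ^ (p-1) = 1 := by rw [← Real.rpow_add hk0]; norm_num
      rw [hx₀def, ← hFkF]
      rw [div_mul_eq_mul_div, eq_div_iff (by positivity)]
      linear_combination (Fk ^ p * G) * he1
    have hJle' := mul_le_mul_of_nonneg_left hJle hp0.le
    linarith [ftc, hφε, hTsplit, hφk, hJle']
  -- limit along ε = k/(n+2)
  have tendsto_tail : ∀ f : ℝ → ℝ, IntegrableOn f (Ioc (0:ℝ) k) →
      Tendsto (fun n : ℕ => ∫ t in Ioc (k/(n+2)) k, f t) atTop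
        (𝓝 (∫ t in Ioc (0:ℝ) k, f t)) := by
    intro f hf
    have hu : ⋃ n : ℕ, Ioc (k/((n:ℝ)+2)) k = Ioc (0:ℝ) k := by
      ext t
      simp only [mem_iUnion, mem_Ioc]
      constructor
      · rintro ⟨n, h1, h2⟩
        exact ⟨lt_trans (by positivity) h1, h2⟩
      · rintro ⟨ht0, htk⟩
        obtain ⟨n, hn⟩ := exists_nat_gt (k / t)
        refine ⟨n, ?_, htk⟩
        rw [div_lt_iff₀ (by positivity)]
        rw [div_lt_iff₀ ht0] at hn
        nlinarith
    rw [← hu]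
    refine tendsto_setIntegral_of_monotone (fun n => measurableSet_Ioc) ?_ (by rwa [hu])
    intro m n hmn
    refine Ioc_subset_Ioc ?_ le_rfl
    have hmn' : (m:ℝ) ≤ (n:ℝ) := by exact_mod_cast hmn
    gcongr
  have star : (p-1) * I + x₀ * G ≤ p * I ^ ((p-1)/p) * G ^ (1/p) := by
    have h1 := tendsto_tail _ hI
    have h2 := tendsto_tail _ (hg_p.mono_set hsub)
    rw [← hIdef] at h1
    rw [← hGdef] at h2
    have hseq : ∀ n : ℕ, x₀ * G ≤ p * I ^ ((p-1)/p) * G ^ (1/p)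
        - (p-1) * (∫ t in Ioc (k/((n:ℝ)+2)) k, ((1/t) * F t) ^ p)
        + (G - ∫ t in Ioc (k/((n:ℝ)+2)) k, g t ^ p) := fun n =>
      step _ (by positivity) (div_lt_self hk0 (by have h := Nat.cast_nonneg (α := ℝ) n; linarith))
    have hlim : Tendsto (fun n : ℕ => p * I ^ ((p-1)/p) * G ^ (1/p)
        - (p-1) * (∫ t in Ioc (k/((n:ℝ)+2)) k, ((1/t) * F t) ^ p)
        + (G - ∫ t in Ioc (k/((n:ℝ)+2)) k, g t ^ p)) atTop
        (𝓝 (p * I ^ ((p-1)/p) * G ^ (1/p) - (p-1) * I + (G - G))) :=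
      (tendsto_const_nhds.sub (h1.const_mul _)).add (tendsto_const_nhds.sub h2)
    have hfin := ge_of_tendsto hlim (Eventually.of_forall hseq)
    linarith
  -- final algebra
  set y := (I / G) ^ (1/p) with hydef
  have hIGnn : (0:ℝ) ≤ I / G := div_nonneg hInn hGnn
  have hyp : y ^ p = I / G := by
    rw [hydef, one_div, Real.rpow_inv_rpow hIGnn (ne_of_gt hp0)]
  have hyp1 : y ^ (p-1) = (I/G) ^ ((p-1)/p) := by
    rw [hydef, ← Real.rpow_mul hIGnn]
    congr 1; ring
  have hynn : 0 ≤ y := Real.rpow_nonneg hIGnn _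
  clear_value y
  have hIG : p * I ^ ((p-1)/p) * G ^ (1/p) = p * y ^ (p-1) * G := by
    have hGa : (0:ℝ) < G ^ ((p-1)/p) := Real.rpow_pos_of_pos hGpos _
    have e3 : G ^ ((p-1)/p) * G ^ (1/p) = G := by
      rw [← Real.rpow_add hGpos]
      rw [show (p-1)/p + 1/p = 1 by field_simp; ring, Real.rpow_one]
    rw [hyp1, Real.div_rpow hInn hGnn]
    field_simp
    linear_combination I ^ ((p-1)/p) * e3
  have hxy : x₀ ≤ -(p-1) * y ^ p + p * y ^ (p-1) := by
    have h2 : ((p-1) * y ^ p + x₀) * G ≤ (p * y ^ (p-1)) * G := by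
      rw [hyp]
      have : (p-1) * (I/G) * G = (p-1) * I := by field_simp
      nlinarith [star, hIG]
    have h3 := le_of_mul_le_mul_right h2 hGpos
    linarith
  by_contra hcon
  push_neg at hcon
  have h5 : ω x₀ ^ p < I / G := (lt_div_iff₀ hGpos).mpr (by linarith)
  have h6 : ω x₀ < y := by
    have h7 := Real.rpow_lt_rpow (Real.rpow_nonneg hωnn p) h5 (by positivity : (0:ℝ) < 1/p)
    rw [one_div, Real.rpow_rpow_inv hωnn (ne_of_gt hp0)] at h7
    rw [hydef, one_div]
    exact h7
  have hy1 : 1 ≤ y := le_of_lt (lt_of_le_of_lt hω1 h6)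
  have hanti : StrictAntiOn (fun z : ℝ => -(p-1) * z ^ p + p * z ^ (p-1)) (Ici 1) := by
    refine strictAntiOn_of_deriv_neg (convex_Ici 1) ?_ ?_
    · refine ContinuousOn.add ?_ ?_ <;> refine continuousOn_const.mul ?_ <;>
        exact ContinuousOn.rpow_const continuousOn_id
          (fun z hz => Or.inl (by
            have h1z : (1:ℝ) ≤ z := hz
            intro h; rw [h] at h1z; linarith))
    · rw [interior_Ici]
      intro z hz
      have hz1 : (1:ℝ) < z := mem_Ioi.mp hz
      have hz0 : (0:ℝ) < z := by linarith
      have hd : HasDerivAt (fun z : ℝ => -(p-1) * z ^ p + p * z ^ (p-1))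
          (-(p-1) * (p * z ^ (p-1)) + p * ((p-1) * z ^ (p-1-1))) z :=
        ((Real.hasDerivAt_rpow_const (Or.inl hz0.ne')).const_mul _).add
          ((Real.hasDerivAt_rpow_const (Or.inl hz0.ne')).const_mul _)
      rw [hd.deriv, show p-1-1 = p-2 by ring]
      have h7 : z ^ (p-2) < z ^ (p-1) := Real.rpow_lt_rpow_of_exponent_lt hz1 (by linarith)
      nlinarith [mul_pos (mul_pos hp0 hp1) (sub_pos.mpr h7)]
  have h8 := hanti (mem_Ici.mpr hω1) (mem_Ici.mpr hy1) h6
  simp only at h8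
  rw [hωeq] at h8
  linarith
end

section
/- Let J, A, B, k > 0 with p > 1 satisfy J ≤ -(1/(p-1)) k^{1-p} B^p + (p/(p-1)) A^{1/p} J^{(p-1)/p}, and suppose B^p ≤ k^{p-1} A. Then J ≤ A · ω_p(B^p / (k^{p-1} A))^p, where ω_p is the inverse of H_p(z) = -(p-1)z^p + p z^{p-1} on [1, p/(p-1)]. -/
open Set

private lemma Hp_strictAntiOn (p : ℝ) (hp : 1 < p) :
    StrictAntiOn (fun t : ℝ => -(p - 1) * t ^ p + p * t ^ (p - 1)) (Set.Ici 1) := by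
  have hp1 : (0:ℝ) < p - 1 := sub_pos.mpr hp
  apply strictAntiOn_of_deriv_neg (convex_Ici 1)
  · apply ContinuousOn.add
    · exact ContinuousOn.mul continuousOn_const (fun t ht =>
        (Real.continuousAt_rpow_const t p (Or.inr (by linarith))).continuousWithinAt)
    · exact ContinuousOn.mul continuousOn_const (fun t ht =>
        (Real.continuousAt_rpow_const t (p-1) (Or.inr (by linarith))).continuousWithinAt)
  · intro t ht
    rw [interior_Ici] at ht
    have ht1 : (1:ℝ) < t := ht
    have ht0 : (0:ℝ) < t := by linarith
    have h1 : HasDerivAt (fun t : ℝ => t ^ p) (p * t ^ (p - 1)) t :=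
      Real.hasDerivAt_rpow_const (Or.inl ht0.ne')
    have h2 : HasDerivAt (fun t : ℝ => t ^ (p - 1)) ((p - 1) * t ^ (p - 2)) t := by
      have := Real.hasDerivAt_rpow_const (x := t) (p := p - 1) (Or.inl ht0.ne')
      convert this using 2
      ring
    have hd : HasDerivAt (fun t : ℝ => -(p - 1) * t ^ p + p * t ^ (p - 1))
        (-(p - 1) * (p * t ^ (p - 1)) + p * ((p - 1) * t ^ (p - 2))) t :=
      (h1.const_mul _).add (h2.const_mul _)
    rw [hd.deriv]
    have hlt : t ^ (p - 2) < t ^ (p - 1) :=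
      Real.rpow_lt_rpow_of_exponent_lt ht1 (by linarith)
    nlinarith [mul_pos (mul_pos hp0' hp1) (sub_pos.mpr hlt)]
  where hp0' : (0:ℝ) < p := by linarith

/-- The algebraic step (3.7)-(3.8): if `J ≤ -(p-1)⁻¹ k^{1-p} B^p + p/(p-1) A^{1/p} J^{(p-1)/p}`
and `B^p ≤ k^{p-1} A`, then `J ≤ A ω_p(B^p/(k^{p-1}A))^p`. -/
theorem J_le_A_omega (p : ℝ) (hp : 1 < p) (ω : ℝ → ℝ)
    (hω : ∀ x ∈ Set.Icc (0:ℝ) 1, ω x ∈ Set.Icc 1 (p / (p - 1)) ∧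
      -(p - 1) * ω x ^ p + p * ω x ^ (p - 1) = x)
    (J A B k : ℝ) (hJ : 0 < J) (hA : 0 < A) (hB : 0 < B) (hk : 0 < k)
    (hineq : J ≤ -(1 / (p - 1)) * k ^ (1 - p) * B ^ p +
      (p / (p - 1)) * A ^ (1 / p) * J ^ ((p - 1) / p))
    (hhold : B ^ p ≤ k ^ (p - 1) * A) :
    J ≤ A * ω (B ^ p / (k ^ (p - 1) * A)) ^ p := by
  have hp0 : (0:ℝ) < p := by linarith
  have hp1 : (0:ℝ) < p - 1 := sub_pos.mpr hp
  set x : ℝ := B ^ p / (k ^ (p - 1) * A) with hxdef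
  have hkp : (0:ℝ) < k ^ (p - 1) := Real.rpow_pos_of_pos hk _
  have hBp : (0:ℝ) < B ^ p := Real.rpow_pos_of_pos hB _
  have hkA : (0:ℝ) < k ^ (p - 1) * A := mul_pos hkp hA
  have hx0 : (0:ℝ) ≤ x := le_of_lt (div_pos hBp hkA)
  have hx1 : x ≤ 1 := (div_le_one hkA).mpr hhold
  obtain ⟨hzmem, hHz⟩ := hω x ⟨hx0, hx1⟩
  set z : ℝ := ω x with hzdef
  have hz1 : (1:ℝ) ≤ z := hzmem.1
  by_contra hcon
  push_neg at hcon
  set t : ℝ := (J / A) ^ (1 / p) with htdef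
  have hJA : (0:ℝ) < J / A := div_pos hJ hA
  have ht0 : (0:ℝ) < t := Real.rpow_pos_of_pos hJA _
  have htp : t ^ p = J / A := by
    rw [htdef, ← Real.rpow_mul hJA.le, one_div, inv_mul_cancel₀ hp0.ne', Real.rpow_one]
  have hJeq : J = A * t ^ p := by rw [htp]; field_simp
  have hzt : z < t := by
    by_contra h
    push_neg at h
    have h1 : t ^ p ≤ z ^ p := Real.rpow_le_rpow ht0.le h hp0.le
    rw [htp] at h1
    have h2 : J ≤ z ^ p * A := (div_le_iff₀ hA).mp h1
    linarith
  have ht1 : (1:ℝ) ≤ t := le_of_lt (lt_of_le_of_lt hz1 hzt)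
  have hkB : k ^ (1 - p) * B ^ p = x * A := by
    rw [show (1 - p) = -(p - 1) by ring, Real.rpow_neg hk.le, hxdef]
    field_simp
  have hJpow : A ^ (1 / p) * J ^ ((p - 1) / p) = A * t ^ (p - 1) := by
    rw [hJeq, Real.mul_rpow hA.le (Real.rpow_pos_of_pos ht0 p).le,
      ← Real.rpow_mul ht0.le, show p * ((p - 1) / p) = p - 1 by field_simp,
      ← mul_assoc, ← Real.rpow_add hA, show 1 / p + (p - 1) / p = 1 by field_simp; ring,
      Real.rpow_one]
  have hineq' : A * t ^ p ≤ -(1 / (p - 1)) * (x * A) + (p / (p - 1)) * (A * t ^ (p - 1)) := by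
    rw [← hJeq]
    calc J ≤ -(1 / (p - 1)) * k ^ (1 - p) * B ^ p +
        (p / (p - 1)) * A ^ (1 / p) * J ^ ((p - 1) / p) := hineq
      _ = -(1 / (p - 1)) * (x * A) + (p / (p - 1)) * (A * t ^ (p - 1)) := by
          rw [mul_assoc, hkB, mul_assoc, hJpow]
  have h3 : A * x ≤ A * (-(p - 1) * t ^ p + p * t ^ (p - 1)) := by
    have h := mul_le_mul_of_nonneg_left hineq' hp1.le
    have e : (p - 1) * (-(1 / (p - 1)) * (x * A) + (p / (p - 1)) * (A * t ^ (p - 1)))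
        = -(x * A) + p * (A * t ^ (p - 1)) := by field_simp
    rw [e] at h
    nlinarith [h]
  have key : x ≤ -(p - 1) * t ^ p + p * t ^ (p - 1) := le_of_mul_le_mul_left h3 hA
  have hmono := Hp_strictAntiOn p hp (mem_Ici.mpr hz1) (mem_Ici.mpr ht1) hzt
  simp only [] at hmono
  rw [hHz] at hmono
  linarith
end

section
/- Let (X, μ) be a non-atomic probability space with a tree structure 𝒯 and associated maximal operator M_𝒯. Let φ : X → ℝ≥0 be integrable with decreasing rearrangement φ* : (0,1] → ℝ≥0. Then for every t ∈ (0,1], (M_𝒯 φ)*(t) ≤ (1/t) ∫_0^t φ*(u) du. -/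
open MeasureTheory Set

/-- A tree structure on a probability space, as in the paper: a system of measurable
sets of positive measure, organized in generations, each set split into at least two
pairwise disjoint children, with generation measures shrinking to zero. -/
structure MTree (X : Type*) [MeasurableSpace X] (μ : Measure X) where
  C : Set X → Set (Set X)
  gen : ℕ → Set (Set X)
  gen_zero : gen 0 = {Set.univ}
  gen_succ : ∀ m, gen (m + 1) = ⋃ I ∈ gen m, C I
  meas : ∀ I ∈ ⋃ m, gen m, MeasurableSet I
  pos : ∀ I ∈ ⋃ m, gen m, 0 < μ I
  child_countable : ∀ I ∈ ⋃ m, gen m, (C I).Countable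
  child_nontrivial : ∀ I ∈ ⋃ m, gen m, (C I).Nontrivial
  child_sub : ∀ I ∈ ⋃ m, gen m, ∀ J ∈ C I, J ⊆ I
  child_disj : ∀ I ∈ ⋃ m, gen m, (C I).PairwiseDisjoint id
  child_union : ∀ I ∈ ⋃ m, gen m, ⋃₀ C I = I
  shrink : Filter.Tendsto (fun m => ⨆ I ∈ gen m, μ I) Filter.atTop (nhds 0)

/-- The collection of all sets of the tree. -/
def MTree.sets {X : Type*} [MeasurableSpace X] {μ : Measure X} (T : MTree X μ) :
    Set (Set X) := ⋃ m, T.gen m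

/-- The maximal operator associated to a tree:
`M_T φ x = sup { μ(I)⁻¹ ∫_I |φ| dμ : x ∈ I ∈ T }`. -/
noncomputable def MTree.maximal {X : Type*} [MeasurableSpace X] {μ : Measure X}
    (T : MTree X μ) (φ : X → ℝ) (x : X) : ℝ :=
  sSup {r : ℝ | ∃ I ∈ T.sets, x ∈ I ∧ r = (∫ u in I, |φ u| ∂μ) / (μ I).toReal}

namespace MTree

variable {X : Type*} [MeasurableSpace X] {μ : Measure X} (T : MTree X μ)

lemma mem_sets_of_gen {I : Set X} {m : ℕ} (h : I ∈ T.gen m) : I ∈ ⋃ m, T.gen m :=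
  Set.mem_iUnion.2 ⟨m, h⟩

lemma gen_countable (m : ℕ) : (T.gen m).Countable := by
  induction m with
  | zero => rw [T.gen_zero]; exact Set.countable_singleton _
  | succ m ih =>
    rw [T.gen_succ]
    exact ih.biUnion fun I hI => T.child_countable I (T.mem_sets_of_gen hI)

lemma sets_countable : T.sets.Countable := Set.countable_iUnion T.gen_countable

lemma gen_disjoint_and_union (m : ℕ) :
    (T.gen m).PairwiseDisjoint id ∧ ⋃₀ T.gen m = Set.univ := by
  induction m with
  | zero =>
    rw [T.gen_zero]
    exact ⟨Set.pairwiseDisjoint_singleton _ _, by simp⟩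
  | succ m ih =>
    obtain ⟨ihd, ihu⟩ := ih
    constructor
    · intro J₁ h₁ J₂ h₂ hne
      rw [T.gen_succ] at h₁ h₂
      simp only [Set.mem_iUnion] at h₁ h₂
      obtain ⟨I₁, hI₁, hJ₁⟩ := h₁
      obtain ⟨I₂, hI₂, hJ₂⟩ := h₂
      by_cases hI : I₁ = I₂
      · subst hI
        exact T.child_disj I₁ (T.mem_sets_of_gen hI₁) hJ₁ hJ₂ hne
      · exact (ihd hI₁ hI₂ hI).mono (T.child_sub I₁ (T.mem_sets_of_gen hI₁) J₁ hJ₁)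
          (T.child_sub I₂ (T.mem_sets_of_gen hI₂) J₂ hJ₂)
    · apply Set.eq_univ_of_forall
      intro x
      have hx : x ∈ ⋃₀ T.gen m := ihu ▸ Set.mem_univ x
      obtain ⟨I, hI, hxI⟩ := hx
      have : x ∈ ⋃₀ T.C I := by
        rw [T.child_union I (T.mem_sets_of_gen hI)]; exact hxI
      obtain ⟨J, hJ, hxJ⟩ := this
      exact ⟨J, by rw [T.gen_succ]; exact Set.mem_iUnion₂.2 ⟨I, hI, hJ⟩, hxJ⟩

lemma exists_ancestor {m : ℕ} : ∀ {n}, m ≤ n → ∀ {I : Set X}, I ∈ T.gen n →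
    ∃ J ∈ T.gen m, I ⊆ J := by
  intro n
  induction n with
  | zero =>
    intro h I hI
    exact ⟨I, Nat.le_zero.1 h ▸ hI, subset_rfl⟩
  | succ n ih =>
    intro h I hI
    rcases Nat.lt_or_ge m (n + 1) with hlt | hge
    · have hmn : m ≤ n := Nat.lt_succ_iff.1 hlt
      rw [T.gen_succ] at hI
      simp only [Set.mem_iUnion] at hI
      obtain ⟨P, hP, hIP⟩ := hI
      obtain ⟨J, hJ, hPJ⟩ := ih hmn hP
      exact ⟨J, hJ, (T.child_sub P (T.mem_sets_of_gen hP) I hIP).trans hPJ⟩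
    · exact ⟨I, (le_antisymm h hge) ▸ hI, subset_rfl⟩

lemma covering (φ' : X → ENNReal) (c : ENNReal) :
    c * μ (⋃₀ {I | I ∈ T.sets ∧ c * μ I ≤ ∫⁻ x in I, φ' x ∂μ}) ≤
      ∫⁻ x in ⋃₀ {I | I ∈ T.sets ∧ c * μ I ≤ ∫⁻ x in I, φ' x ∂μ}, φ' x ∂μ := by
  classical
  set F : Set (Set X) := {I | I ∈ T.sets ∧ c * μ I ≤ ∫⁻ x in I, φ' x ∂μ} with hFdef
  have hsel : ∀ x ∈ ⋃₀ F, ∃ m, ∃ I ∈ T.gen m, x ∈ I ∧ I ∈ F ∧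
      ∀ k < m, ∀ J ∈ T.gen k, x ∈ J → J ∉ F := by
    intro x hx
    obtain ⟨I0, hI0F, hxI0⟩ := hx
    obtain ⟨m0, hm0⟩ := Set.mem_iUnion.1 hI0F.1
    have hP : ∃ m, ∃ I ∈ T.gen m, x ∈ I ∧ I ∈ F := ⟨m0, I0, hm0, hxI0, hI0F⟩
    obtain ⟨I, hIg, hxI, hIF⟩ := Nat.find_spec hP
    refine ⟨Nat.find hP, I, hIg, hxI, hIF, ?_⟩
    intro k hk J hJ hxJ hJF
    exact Nat.find_min hP hk ⟨J, hJ, hxJ, hJF⟩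
  set D : Set (Set X) := {I | ∃ m, I ∈ T.gen m ∧ I ∈ F ∧
      ∃ x ∈ I, ∀ k < m, ∀ J ∈ T.gen k, x ∈ J → J ∉ F} with hDdef
  have hDF : D ⊆ F := by rintro I ⟨m, _, hF, _⟩; exact hF
  have key : ∀ {m₁ m₂ : ℕ} {I₁ I₂ : Set X} {x₂ z : X}, m₁ ≤ m₂ → I₁ ∈ T.gen m₁ →
      I₂ ∈ T.gen m₂ → I₁ ∈ F → x₂ ∈ I₂ →
      (∀ k < m₂, ∀ J ∈ T.gen k, x₂ ∈ J → J ∉ F) → z ∈ I₁ → z ∈ I₂ → I₁ = I₂ := by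
    intro m₁ m₂ I₁ I₂ x₂ z h12 hI₁ hI₂ hF₁ hx₂ hmin hz₁ hz₂
    rcases eq_or_lt_of_le h12 with heq | hlt
    · subst heq
      exact (T.gen_disjoint_and_union m₁).1.elim hI₁ hI₂
        (Set.not_disjoint_iff.2 ⟨z, hz₁, hz₂⟩)
    · obtain ⟨J, hJ, hsub⟩ := T.exists_ancestor h12 hI₂
      have hJI₁ : J = I₁ :=
        (T.gen_disjoint_and_union m₁).1.elim hJ hI₁
          (Set.not_disjoint_iff.2 ⟨z, hsub hz₂, hz₁⟩)
      exact absurd hF₁ (hmin m₁ hlt I₁ hI₁ (hJI₁ ▸ hsub hx₂))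
  have hDdisj : D.PairwiseDisjoint id := by
    intro I₁ h₁ I₂ h₂ hne
    simp only [Function.onFun, id]
    rw [Set.disjoint_left]
    intro z hz₁ hz₂
    obtain ⟨m₁, hI₁g, hF₁, x₁, hx₁, hmin₁⟩ := h₁
    obtain ⟨m₂, hI₂g, hF₂, x₂, hx₂, hmin₂⟩ := h₂
    rcases le_total m₁ m₂ with h | h
    · exact hne (key h hI₁g hI₂g hF₁ hx₂ hmin₂ hz₁ hz₂)
    · exact hne (key h hI₂g hI₁g hF₂ hx₁ hmin₁ hz₂ hz₁).symm
  have hDU : ⋃₀ D = ⋃₀ F := by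
    apply Set.Subset.antisymm (Set.sUnion_subset_sUnion hDF)
    intro x hx
    obtain ⟨m, I, hIg, hxI, hIF, hmin⟩ := hsel x hx
    exact ⟨I, ⟨m, hIg, hIF, x, hxI, hmin⟩, hxI⟩
  have hDc : D.Countable := T.sets_countable.mono fun I hI => (hDF hI).1
  haveI := hDc.to_subtype
  have hDm : ∀ I : D, MeasurableSet (I : Set X) := fun I => T.meas I (hDF I.2).1
  have hPD : Pairwise (Function.onFun Disjoint (fun I : D => (I : Set X))) :=
    fun I J hIJ => hDdisj I.2 J.2 fun h => hIJ (Subtype.ext h)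
  rw [← hDU, Set.sUnion_eq_iUnion, measure_iUnion hPD hDm, lintegral_iUnion hDm hPD,
    ← ENNReal.tsum_mul_left]
  exact ENNReal.tsum_le_tsum fun I => (hDF I.2).2

end MTree

lemma line_min_lemma (A : Set ℝ) (hA : A ⊆ Set.Ioc 0 1)
    (hdc : ∀ s ∈ A, ∀ u : ℝ, 0 < u → u ≤ s → u ∈ A) {τ : ℝ} (hτ : 0 < τ) :
    volume (Set.Ioc 0 τ ∩ A) = min (ENNReal.ofReal τ) (volume A) := by
  rcases A.eq_empty_or_nonempty with rfl | hne
  · simp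
  · set a := sSup A with ha
    have hbdd : BddAbove A := ⟨1, fun s hs => (hA hs).2⟩
    have hsub1 : Set.Ioo 0 a ⊆ A := by
      intro u hu
      obtain ⟨s, hs, hus⟩ := exists_lt_of_lt_csSup hne hu.2
      exact hdc s hs u hu.1 hus.le
    have hsub2 : A ⊆ Set.Ioc 0 a := fun s hs => ⟨(hA hs).1, le_csSup hbdd hs⟩
    have hvolA : volume A = ENNReal.ofReal a := by
      apply le_antisymm
      · calc volume A ≤ volume (Set.Ioc 0 a) := measure_mono hsub2
          _ = ENNReal.ofReal a := by rw [Real.volume_Ioc, sub_zero]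
      · calc ENNReal.ofReal a = volume (Set.Ioo 0 a) := by rw [Real.volume_Ioo, sub_zero]
          _ ≤ volume A := measure_mono hsub1
    have hsub3 : Set.Ioo 0 (min τ a) ⊆ Set.Ioc 0 τ ∩ A := fun u hu =>
      ⟨⟨hu.1, (hu.2.trans_le (min_le_left _ _)).le⟩,
        hsub1 ⟨hu.1, hu.2.trans_le (min_le_right _ _)⟩⟩
    have hsub4 : Set.Ioc 0 τ ∩ A ⊆ Set.Ioc 0 (min τ a) := fun u hu =>
      ⟨hu.1.1, le_min hu.1.2 (hsub2 hu.2).2⟩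
    have hvol2 : volume (Set.Ioc 0 τ ∩ A) = ENNReal.ofReal (min τ a) := by
      apply le_antisymm
      · calc volume (Set.Ioc 0 τ ∩ A) ≤ volume (Set.Ioc 0 (min τ a)) := measure_mono hsub4
          _ = ENNReal.ofReal (min τ a) := by rw [Real.volume_Ioc, sub_zero]
      · calc ENNReal.ofReal (min τ a) = volume (Set.Ioo 0 (min τ a)) := by
              rw [Real.volume_Ioo, sub_zero]
          _ ≤ volume (Set.Ioc 0 τ ∩ A) := measure_mono hsub3
    rw [hvol2, hvolA]
    rcases le_total τ a with h | h
    · rw [min_eq_left h, min_eq_left (ENNReal.ofReal_le_ofReal h)]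
    · rw [min_eq_right h, min_eq_right (ENNReal.ofReal_le_ofReal h)]

/-- Lemma 3.1: `(M_T φ)*(t) ≤ t⁻¹ ∫₀ᵗ φ*(u) du` for every `t ∈ (0,1]`. -/
theorem rearrangement_maximal_bound
    {X : Type*} [MeasurableSpace X] (μ : Measure X) [IsProbabilityMeasure μ]
    [NullSingletonClass μ] (T : MTree X μ)
    (φ : X → ℝ) (hφ : ∀ x, 0 ≤ φ x) (hint : Integrable φ μ)
    (φs : ℝ → ℝ)
    (hφs_anti : AntitoneOn φs (Set.Ioc 0 1))
    (hφs_nonneg : ∀ t ∈ Set.Ioc (0:ℝ) 1, 0 ≤ φs t)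
    (hφs_left : ∀ t ∈ Set.Ioc (0:ℝ) 1, ContinuousWithinAt φs (Set.Iic t) t)
    (hφs_equi : ∀ y : ℝ, μ {x | y < φ x} = volume {t ∈ Set.Ioc (0:ℝ) 1 | y < φs t})
    (ms : ℝ → ℝ)
    (hms_anti : AntitoneOn ms (Set.Ioc 0 1))
    (hms_left : ∀ t ∈ Set.Ioc (0:ℝ) 1, ContinuousWithinAt ms (Set.Iic t) t)
    (hms_equi : ∀ y : ℝ, μ {x | y < T.maximal φ x} =
      volume {t ∈ Set.Ioc (0:ℝ) 1 | y < ms t}) :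
    ∀ t ∈ Set.Ioc (0:ℝ) 1, ms t ≤ (1 / t) * ∫ u in Set.Ioc (0:ℝ) t, φs u := by
  intro t ht
  obtain ⟨ht0, ht1⟩ := ht
  set B := ∫ u in Set.Ioc (0:ℝ) t, φs u with hBdef
  have hBnn : 0 ≤ B := setIntegral_nonneg measurableSet_Ioc
    fun u hu => hφs_nonneg u ⟨hu.1, hu.2.trans ht1⟩
  have hφmble : AEMeasurable φ μ := hint.aemeasurable
  have hφnn_ae : 0 ≤ᵐ[μ] φ := Filter.Eventually.of_forall hφ
  -- downward closedness of superlevel sets of φs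
  have hdc : ∀ y : ℝ, ∀ s ∈ Set.Ioc (0:ℝ) 1 ∩ {s | y < φs s}, ∀ u : ℝ, 0 < u → u ≤ s →
      u ∈ Set.Ioc (0:ℝ) 1 ∩ {s | y < φs s} := by
    intro y s hs u hu0 hus
    have hu1 : u ∈ Set.Ioc (0:ℝ) 1 := ⟨hu0, hus.trans hs.1.2⟩
    exact ⟨hu1, lt_of_lt_of_le hs.2 (hφs_anti hu1 hs.1 hus)⟩
  have hsep : ∀ y : ℝ, {s ∈ Set.Ioc (0:ℝ) 1 | y < φs s} = Set.Ioc (0:ℝ) 1 ∩ {s | y < φs s} :=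
    fun y => rfl
  -- layercake on the line
  have hlayer_line : ∀ τ : ℝ, 0 < τ → τ ≤ 1 →
      ∫⁻ s in Set.Ioc (0:ℝ) τ, ENNReal.ofReal (φs s) =
        ∫⁻ y in Set.Ioi (0:ℝ), volume (Set.Ioc 0 τ ∩ {s | y < φs s}) := by
    intro τ hτ0 hτ1
    have hmono : AEMeasurable φs (volume.restrict (Set.Ioc (0:ℝ) τ)) :=
      aemeasurable_restrict_of_antitoneOn measurableSet_Ioc
        (hφs_anti.mono (Set.Ioc_subset_Ioc le_rfl hτ1))
    have hnn : 0 ≤ᵐ[volume.restrict (Set.Ioc (0:ℝ) τ)] φs :=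
      ae_restrict_of_forall_mem measurableSet_Ioc
        fun s hs => hφs_nonneg s ⟨hs.1, hs.2.trans hτ1⟩
    rw [lintegral_eq_lintegral_meas_lt _ hnn hmono]
    refine lintegral_congr fun y => ?_
    rw [Measure.restrict_apply' measurableSet_Ioc, Set.inter_comm]
  -- finiteness of ∫⁻ φs on (0,1]
  have hfin1 : ∫⁻ s in Set.Ioc (0:ℝ) 1, ENNReal.ofReal (φs s) < ⊤ := by
    rw [hlayer_line 1 one_pos le_rfl]
    calc ∫⁻ y in Set.Ioi (0:ℝ), volume (Set.Ioc (0:ℝ) 1 ∩ {s | y < φs s})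
        = ∫⁻ y in Set.Ioi (0:ℝ), μ {x | y < φ x} :=
          lintegral_congr fun y => by rw [hφs_equi y, hsep y]
      _ = ∫⁻ x, ENNReal.ofReal (φ x) ∂μ :=
          (lintegral_eq_lintegral_meas_lt μ hφnn_ae hφmble).symm
      _ < ⊤ := hint.lintegral_lt_top
  have hφs_mble : AEMeasurable φs (volume.restrict (Set.Ioc (0:ℝ) 1)) :=
    aemeasurable_restrict_of_antitoneOn measurableSet_Ioc hφs_anti
  have hφs_int : IntegrableOn φs (Set.Ioc (0:ℝ) 1) := by
    refine ⟨hφs_mble.aestronglyMeasurable, ?_⟩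
    rw [hasFiniteIntegral_iff_ofReal (ae_restrict_of_forall_mem measurableSet_Ioc hφs_nonneg)]
    exact hfin1
  -- the key estimate
  have key : ∀ l : ℝ, 0 < l → l < ms t → l * t ≤ B := by
    intro l hl0 hlt
    set F : Set (Set X) :=
      {I | I ∈ T.sets ∧ ENNReal.ofReal l * μ I ≤ ∫⁻ x in I, ENNReal.ofReal (φ x) ∂μ} with hFdef
    set U := ⋃₀ F with hUdef
    have hUmeas : MeasurableSet U :=
      MeasurableSet.sUnion (T.sets_countable.mono fun I hI => hI.1)
        fun I hI => T.meas I hI.1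
    -- {Mφ > l} ⊆ U
    have hsubU : {x | l < T.maximal φ x} ⊆ U := by
      intro x hx
      have hne : {r : ℝ | ∃ I ∈ T.sets, x ∈ I ∧
          r = (∫ u in I, |φ u| ∂μ) / (μ I).toReal}.Nonempty := by
        refine ⟨_, Set.univ, ?_, Set.mem_univ x, rfl⟩
        exact T.mem_sets_of_gen (show Set.univ ∈ T.gen 0 by rw [T.gen_zero]; rfl)
      obtain ⟨r, ⟨I, hIs, hxI, hr⟩, hlr⟩ := exists_lt_of_lt_csSup hne hx
      have hμI : 0 < μ I := T.pos I hIs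
      have hμIfin : μ I ≠ ⊤ := (measure_lt_top μ I).ne
      have hμItR : 0 < (μ I).toReal := ENNReal.toReal_pos hμI.ne' hμIfin
      have hint' : ∫ u in I, |φ u| ∂μ = (∫⁻ u in I, ENNReal.ofReal (φ u) ∂μ).toReal := by
        simp_rw [fun u => abs_of_nonneg (hφ u)]
        exact integral_eq_lintegral_of_nonneg_ae (Filter.Eventually.of_forall hφ)
          hint.1.restrict
      subst hr
      rw [hint', lt_div_iff₀ hμItR] at hlr
      have hlint_fin : (∫⁻ u in I, ENNReal.ofReal (φ u) ∂μ) ≠ ⊤ :=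
        ((setLIntegral_le_lintegral I _).trans_lt hint.lintegral_lt_top).ne
      refine ⟨I, ⟨hIs, ?_⟩, hxI⟩
      rw [← ENNReal.toReal_le_toReal (ENNReal.mul_ne_top ENNReal.ofReal_ne_top hμIfin)
        hlint_fin, ENNReal.toReal_mul, ENNReal.toReal_ofReal hl0.le]
      exact hlr.le
    -- μ U ≥ t
    have hmsU : ENNReal.ofReal t ≤ μ U := by
      calc ENNReal.ofReal t = volume (Set.Ioc (0:ℝ) t) := by rw [Real.volume_Ioc, sub_zero]
        _ ≤ volume {s ∈ Set.Ioc (0:ℝ) 1 | l < ms s} := by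
            refine measure_mono fun s hs => ?_
            have hs1 : s ∈ Set.Ioc (0:ℝ) 1 := ⟨hs.1, hs.2.trans ht1⟩
            exact ⟨hs1, lt_of_lt_of_le hlt (hms_anti hs1 ⟨ht0, ht1⟩ hs.2)⟩
        _ = μ {x | l < T.maximal φ x} := (hms_equi l).symm
        _ ≤ μ U := measure_mono hsubU
    set τ := (μ U).toReal with hτdef
    have hμUfin : μ U ≠ ⊤ := (measure_lt_top μ U).ne
    have hμU : ENNReal.ofReal τ = μ U := ENNReal.ofReal_toReal hμUfin
    have htτ : t ≤ τ := by
      rw [← ENNReal.ofReal_le_ofReal_iff ENNReal.toReal_nonneg, hμU]; exact hmsU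
    have hτ1 : τ ≤ 1 := by
      have h1 : (μ U).toReal ≤ (1 : ENNReal).toReal :=
        ENNReal.toReal_mono ENNReal.one_ne_top prob_le_one
      simpa using h1
    have hτ0 : 0 < τ := lt_of_lt_of_le ht0 htτ
    have hcov := T.covering (fun x => ENNReal.ofReal (φ x)) (ENNReal.ofReal l)
    -- Hardy–Littlewood
    have hHL : ∫⁻ x in U, ENNReal.ofReal (φ x) ∂μ ≤
        ∫⁻ s in Set.Ioc (0:ℝ) τ, ENNReal.ofReal (φs s) := by
      rw [hlayer_line τ hτ0 hτ1,
        lintegral_eq_lintegral_meas_lt (μ.restrict U)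
          (Filter.Eventually.of_forall hφ) hφmble.restrict]
      refine lintegral_mono fun y => ?_
      rw [Measure.restrict_apply' hUmeas]
      have h3 : Set.Ioc (0:ℝ) τ ∩ {s | y < φs s} =
          Set.Ioc 0 τ ∩ (Set.Ioc (0:ℝ) 1 ∩ {s | y < φs s}) := by
        rw [← Set.inter_assoc, Set.Ioc_inter_Ioc]
        simp [min_eq_left hτ1]
      calc μ ({x | y < φ x} ∩ U) ≤ min (ENNReal.ofReal τ) (μ {x | y < φ x}) := by
            rw [hμU]
            exact le_min (measure_mono Set.inter_subset_right)
              (measure_mono Set.inter_subset_left)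
        _ = min (ENNReal.ofReal τ) (volume (Set.Ioc (0:ℝ) 1 ∩ {s | y < φs s})) := by
            rw [hφs_equi y, hsep y]
        _ = volume (Set.Ioc 0 τ ∩ (Set.Ioc (0:ℝ) 1 ∩ {s | y < φs s})) :=
            (line_min_lemma _ Set.inter_subset_left (hdc y) hτ0).symm
        _ = volume (Set.Ioc (0:ℝ) τ ∩ {s | y < φs s}) := by rw [h3]
    have hmain : ENNReal.ofReal l * μ U ≤
        ∫⁻ s in Set.Ioc (0:ℝ) τ, ENNReal.ofReal (φs s) := le_trans hcov hHL
    have hfinτ : (∫⁻ s in Set.Ioc (0:ℝ) τ, ENNReal.ofReal (φs s)) ≠ ⊤ := by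
      refine ((lintegral_mono' (Measure.restrict_mono
        (Set.Ioc_subset_Ioc le_rfl hτ1) le_rfl) le_rfl).trans_lt hfin1).ne
    have hIτ : l * τ ≤ ∫ s in Set.Ioc (0:ℝ) τ, φs s := by
      have h := ENNReal.toReal_mono hfinτ hmain
      rwa [ENNReal.toReal_mul, ENNReal.toReal_ofReal hl0.le, ← hτdef,
        ← integral_eq_lintegral_of_nonneg_ae
          (ae_restrict_of_forall_mem measurableSet_Ioc
            fun s hs => hφs_nonneg s ⟨hs.1, hs.2.trans hτ1⟩)
          (aemeasurable_restrict_of_antitoneOn measurableSet_Ioc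
            (hφs_anti.mono (Set.Ioc_subset_Ioc le_rfl hτ1))).aestronglyMeasurable] at h
    -- split the integral
    have hi1 : IntegrableOn φs (Set.Ioc (0:ℝ) t) :=
      hφs_int.mono_set (Set.Ioc_subset_Ioc le_rfl ht1)
    have hi2 : IntegrableOn φs (Set.Ioc t τ) :=
      hφs_int.mono_set (Set.Ioc_subset_Ioc ht0.le hτ1)
    have hsplit : ∫ s in Set.Ioc (0:ℝ) τ, φs s = B + ∫ s in Set.Ioc t τ, φs s := by
      rw [← Set.Ioc_union_Ioc_eq_Ioc ht0.le htτ,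
        setIntegral_union (Set.Ioc_disjoint_Ioc_of_le le_rfl) measurableSet_Ioc hi1 hi2]
    have hub : ∫ s in Set.Ioc t τ, φs s ≤ (τ - t) * φs t := by
      have h := setIntegral_mono_on hi2 (integrableOn_const measure_Ioc_lt_top.ne)
        measurableSet_Ioc
        (fun s hs => hφs_anti ⟨ht0, ht1⟩ ⟨ht0.trans hs.1, hs.2.trans hτ1⟩ hs.1.le)
      rwa [setIntegral_const, Real.volume_real_Ioc, max_eq_left (by linarith),
        smul_eq_mul] at h
    have hlb : t * φs t ≤ B := by
      have h := setIntegral_mono_on (integrableOn_const measure_Ioc_lt_top.ne) hi1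
        measurableSet_Ioc
        (fun s hs => hφs_anti ⟨hs.1, hs.2.trans ht1⟩ ⟨ht0, ht1⟩ hs.2)
      rwa [setIntegral_const, Real.volume_real_Ioc, max_eq_left (by linarith),
        sub_zero, smul_eq_mul] at h
    have hφst : 0 ≤ φs t := hφs_nonneg t ⟨ht0, ht1⟩
    rw [hsplit] at hIτ
    nlinarith [mul_le_mul_of_nonneg_right hIτ ht0.le,
      mul_le_mul_of_nonneg_right hub ht0.le,
      mul_le_mul_of_nonneg_left hlb (by linarith : (0:ℝ) ≤ τ - t)]
  -- conclude
  by_contra hcon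
  push_neg at hcon
  have hBt : 0 ≤ (1 / t) * B := by positivity
  have h1 : 0 < ms t := lt_of_le_of_lt hBt hcon
  set l := ((1 / t) * B + ms t) / 2 with hldef
  have hl0 : 0 < l := by positivity
  have hl1 : l < ms t := by
    rw [hldef]; linarith
  have hl2 : (1 / t) * B < l := by rw [hldef]; linarith
  have hk := key l hl0 hl1
  have : l ≤ (1 / t) * B := by
    rw [div_mul_eq_mul_div, one_mul, le_div_iff₀ ht0]
    exact hk
  linarith
end

section
/- Let (X, μ) be a non-atomic probability space with tree 𝒯 and maximal operator M_𝒯 satisfying the weak-type inequality. Let φ : X → ℝ≥0 be integrable, t ∈ (0,1], and set A = (1/t) ∫_0^t φ*(u) du. Then μ({x : M_𝒯 φ(x) > A}) < t. -/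
open MeasureTheory Set

section AuxTree

variable {X : Type*} [MeasurableSpace X] {μ : Measure X} (T : MTree X μ)

lemma MTree.gen_subset_sets (m : ℕ) : T.gen m ⊆ T.sets :=
  fun _ h => Set.mem_iUnion.2 ⟨m, h⟩

lemma MTree.gen_disjoint : ∀ m, (T.gen m).PairwiseDisjoint id := by
  intro m
  induction m with
  | zero => rw [T.gen_zero]; exact Set.pairwiseDisjoint_singleton _ _
  | succ m ih =>
      rw [T.gen_succ]
      intro a ha b hb hab
      simp only [Set.mem_iUnion] at ha hb
      obtain ⟨J₁, hJ₁, ha'⟩ := ha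
      obtain ⟨J₂, hJ₂, hb'⟩ := hb
      by_cases hJ : J₁ = J₂
      · subst hJ
        exact T.child_disj J₁ (T.gen_subset_sets m hJ₁) ha' hb' hab
      · exact (ih hJ₁ hJ₂ hJ).mono (T.child_sub J₁ (T.gen_subset_sets m hJ₁) a ha')
          (T.child_sub J₂ (T.gen_subset_sets m hJ₂) b hb')

lemma MTree.gen_countable_s8 : ∀ m, (T.gen m).Countable := by
  intro m
  induction m with
  | zero => rw [T.gen_zero]; exact Set.countable_singleton _
  | succ m ih =>
      rw [T.gen_succ]
      exact ih.biUnion fun I hI => T.child_countable I (T.gen_subset_sets m hI)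

lemma MTree.sets_countable_s8 : T.sets.Countable :=
  Set.countable_iUnion T.gen_countable_s8

lemma MTree.gen_ancestor : ∀ m k, k ≤ m → ∀ I ∈ T.gen m, ∃ J ∈ T.gen k, I ⊆ J := by
  intro m
  induction m with
  | zero =>
      intro k hk I hI
      exact ⟨I, Nat.le_zero.1 hk ▸ hI, subset_rfl⟩
  | succ m ih =>
      intro k hk I hI
      rcases Nat.lt_or_ge k (m + 1) with h | h
      · have hk' : k ≤ m := Nat.lt_succ_iff.1 h
        rw [T.gen_succ] at hI
        simp only [Set.mem_iUnion] at hI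
        obtain ⟨J', hJ', hIJ'⟩ := hI
        obtain ⟨J, hJ, hJJ⟩ := ih k hk' J' hJ'
        exact ⟨J, hJ, (T.child_sub J' (T.gen_subset_sets m hJ') I hIJ').trans hJJ⟩
      · have : k = m + 1 := le_antisymm hk h
        exact ⟨I, this ▸ hI, subset_rfl⟩

end AuxTree

/-- With `A = t⁻¹ ∫₀ᵗ φ*`, we have `μ({M_T φ > A}) < t`. -/
theorem measure_maximal_gt_avg_lt
    {X : Type*} [MeasurableSpace X] (μ : Measure X) [IsProbabilityMeasure μ]
    [NullSingletonClass μ] (T : MTree X μ)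
    (φ : X → ℝ) (hφ : ∀ x, 0 ≤ φ x) (hint : Integrable φ μ)
    (φs : ℝ → ℝ)
    (hφs_anti : AntitoneOn φs (Set.Ioc 0 1))
    (hφs_nonneg : ∀ t ∈ Set.Ioc (0:ℝ) 1, 0 ≤ φs t)
    (hφs_left : ∀ t ∈ Set.Ioc (0:ℝ) 1, ContinuousWithinAt φs (Set.Iic t) t)
    (hφs_equi : ∀ y : ℝ, μ {x | y < φ x} = volume {t ∈ Set.Ioc (0:ℝ) 1 | y < φs t})
    (t : ℝ) (ht : t ∈ Set.Ioc (0:ℝ) 1)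
    (A : ℝ) (hA : A = (1 / t) * ∫ u in Set.Ioc (0:ℝ) t, φs u) :
    μ {x | A < T.maximal φ x} < ENNReal.ofReal t := by
  classical
  obtain ⟨ht0, ht1⟩ := ht
  by_contra hcon
  push_neg at hcon
  -- basic positivity of A
  have hIoc_sub : Set.Ioc (0:ℝ) t ⊆ Set.Ioc (0:ℝ) 1 := Set.Ioc_subset_Ioc_right ht1
  have hA0 : 0 ≤ A := by
    rw [hA]
    refine mul_nonneg (by positivity) ?_
    exact setIntegral_nonneg measurableSet_Ioc fun u hu => hφs_nonneg u (hIoc_sub hu)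
  -- the averaged quantity
  set avg : Set X → ℝ := fun I => (∫ u in I, |φ u| ∂μ) / (μ I).toReal with havg
  -- the stopping family
  set G : Set (Set X) := {I | ∃ m, I ∈ T.gen m ∧ A < avg I ∧
      ∀ k < m, ∀ J ∈ T.gen k, I ⊆ J → avg J ≤ A} with hG
  have hGsets : G ⊆ T.sets := fun I hI => by
    obtain ⟨m, hm, _, _⟩ := hI; exact T.gen_subset_sets m hm
  have hGcnt : G.Countable := T.sets_countable_s8.mono hGsets
  have hGdisj : G.PairwiseDisjoint id := by
    have key : ∀ I₁ ∈ G, ∀ I₂ ∈ G, ∀ m₁ m₂, m₁ ≤ m₂ → I₁ ∈ T.gen m₁ → I₂ ∈ T.gen m₂ →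
        (∀ k < m₂, ∀ J ∈ T.gen k, I₂ ⊆ J → avg J ≤ A) → A < avg I₁ →
        I₁ ≠ I₂ → Disjoint I₁ I₂ := by
      intro I₁ hI₁ I₂ hI₂ m₁ m₂ hm hg₁ hg₂ hmin₂ havg₁ hne
      by_contra hdisj
      obtain ⟨x, hx₁, hx₂⟩ := Set.not_disjoint_iff.1 hdisj
      rcases eq_or_lt_of_le hm with rfl | hlt
      · exact hdisj (T.gen_disjoint m₁ hg₁ hg₂ hne)
      · obtain ⟨J, hJ, hsub⟩ := T.gen_ancestor m₂ m₁ hlt.le I₂ hg₂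
        have hJI₁ : J = I₁ := by
          by_contra hJne
          exact Set.not_disjoint_iff.2 ⟨x, hsub hx₂, hx₁⟩
            (T.gen_disjoint m₁ hJ hg₁ hJne)
        have := hmin₂ m₁ hlt J hJ hsub
        rw [hJI₁] at this
        exact absurd havg₁ (not_lt.2 this)
    intro I₁ hI₁ I₂ hI₂ hne
    obtain ⟨m₁, hg₁, havg₁, hmin₁⟩ := hI₁
    obtain ⟨m₂, hg₂, havg₂, hmin₂⟩ := hI₂
    rcases le_total m₁ m₂ with hm | hm
    · exact key I₁ ⟨m₁, hg₁, havg₁, hmin₁⟩ I₂ ⟨m₂, hg₂, havg₂, hmin₂⟩ m₁ m₂ hm hg₁ hg₂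
        hmin₂ havg₁ hne
    · exact (key I₂ ⟨m₂, hg₂, havg₂, hmin₂⟩ I₁ ⟨m₁, hg₁, havg₁, hmin₁⟩ m₂ m₁ hm hg₂ hg₁
        hmin₁ havg₂ hne.symm).symm
  -- every point where the maximal function exceeds A is covered by G
  have hEsub : {x | A < T.maximal φ x} ⊆ ⋃₀ G := by
    intro x hx
    have hx' : A < T.maximal φ x := hx
    -- extract a set from the sSup
    have hex : ∃ I ∈ T.sets, x ∈ I ∧ A < avg I := by
      set s := {r : ℝ | ∃ I ∈ T.sets, x ∈ I ∧ r = avg I} with hs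
      have hmax : T.maximal φ x = sSup s := rfl
      rw [hmax] at hx'
      have hne : s.Nonempty := by
        by_contra hemp
        rw [Set.not_nonempty_iff_eq_empty] at hemp
        rw [hemp, Real.sSup_empty] at hx'
        exact absurd hx' (not_lt.2 hA0)
      have hbdd : BddAbove s := by
        by_contra hb
        rw [Real.sSup_of_not_bddAbove hb] at hx'
        exact absurd hx' (not_lt.2 hA0)
      obtain ⟨r, hr, hAr⟩ := (lt_csSup_iff hbdd hne).1 hx'
      obtain ⟨I, hI, hxI, rfl⟩ := hr
      exact ⟨I, hI, hxI, hAr⟩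
    obtain ⟨I, hIs, hxI, havgI⟩ := hex
    obtain ⟨m, hm⟩ := Set.mem_iUnion.1 hIs
    have hP : ∃ n, ∃ I ∈ T.gen n, x ∈ I ∧ A < avg I := ⟨m, I, hm, hxI, havgI⟩
    obtain ⟨I₀, hI₀g, hxI₀, havgI₀⟩ := Nat.find_spec hP
    refine Set.mem_sUnion.2 ⟨I₀, ⟨Nat.find hP, hI₀g, havgI₀, ?_⟩, hxI₀⟩
    intro k hk J hJ hsub
    by_contra hgt
    push_neg at hgt
    exact Nat.find_min hP hk ⟨J, hJ, hsub hxI₀, hgt⟩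
  -- the union and its measure
  set U : Set X := ⋃₀ G with hU
  have hUmeas : MeasurableSet U :=
    MeasurableSet.sUnion hGcnt fun I hI => T.meas I (hGsets hI)
  set c : ENNReal := μ U with hc
  have hc1 : c ≤ 1 := prob_le_one
  have htc : ENNReal.ofReal t ≤ c := hcon.trans (measure_mono hEsub)
  have hcfin : c ≠ ⊤ := (hc1.trans_lt ENNReal.one_lt_top).ne
  set c' := c.toReal with hc'
  have hc'1 : c' ≤ 1 := by
    rw [hc']
    exact ENNReal.toReal_le_of_le_ofReal zero_le_one (by simpa using hc1)
  have htc' : t ≤ c' := by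
    rw [hc']
    exact (ENNReal.ofReal_le_iff_le_toReal hcfin).1 htc
  have hc'pos : 0 < c' := lt_of_lt_of_le ht0 htc'
  have hc_eq : c = ENNReal.ofReal c' := (ENNReal.ofReal_toReal hcfin).symm
  -- layer cake for φs on subintervals
  have LKs : ∀ b : ℝ, b ≤ 1 →
      ∫⁻ s in Set.Ioc (0:ℝ) b, ENNReal.ofReal (φs s) =
        ∫⁻ y in Set.Ioi (0:ℝ), volume ({s | y < φs s} ∩ Set.Ioc 0 b) := by
    intro b hb1
    rw [lintegral_eq_lintegral_meas_lt (volume.restrict (Set.Ioc 0 b))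
        ((ae_restrict_iff' measurableSet_Ioc).2 (ae_of_all _ fun s hs =>
          hφs_nonneg s ⟨hs.1, hs.2.trans hb1⟩))
        (aemeasurable_restrict_of_antitoneOn measurableSet_Ioc
          (hφs_anti.mono (Set.Ioc_subset_Ioc_right hb1)))]
    exact lintegral_congr fun y => Measure.restrict_apply' measurableSet_Ioc
  -- rewriting the separated set
  have hsep : ∀ y : ℝ, {s ∈ Set.Ioc (0:ℝ) 1 | y < φs s} = {s | y < φs s} ∩ Set.Ioc 0 1 := by
    intro y; ext s
    simp only [Set.mem_sep_iff, Set.mem_inter_iff, Set.mem_setOf_eq]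
    tauto
  -- total mass identity
  have keyTotal : ∫⁻ s in Set.Ioc (0:ℝ) 1, ENNReal.ofReal (φs s)
      = ∫⁻ x, ENNReal.ofReal (φ x) ∂μ := by
    rw [LKs 1 le_rfl,
      lintegral_eq_lintegral_meas_lt μ (ae_of_all _ hφ) hint.aemeasurable]
    exact (lintegral_congr fun y => by rw [hφs_equi y, hsep y]).symm
  have hfinφ : ∫⁻ x, ENNReal.ofReal (φ x) ∂μ ≠ ⊤ := by
    have := hint.hasFiniteIntegral
    rw [hasFiniteIntegral_iff_ofReal (ae_of_all _ hφ)] at this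
    exact this.ne
  -- integrability of φs on (0,1]
  have hφs_int : IntegrableOn φs (Set.Ioc (0:ℝ) 1) volume := by
    refine ⟨(aemeasurable_restrict_of_antitoneOn measurableSet_Ioc
      hφs_anti).aestronglyMeasurable, ?_⟩
    rw [hasFiniteIntegral_iff_ofReal ((ae_restrict_iff' measurableSet_Ioc).2
      (ae_of_all _ fun s hs => hφs_nonneg s hs))]
    rw [keyTotal]
    exact hfinφ.lt_top
  have hφs_int_t : IntegrableOn φs (Set.Ioc (0:ℝ) t) volume :=
    hφs_int.mono_set hIoc_sub
  have hφs_int_tc : IntegrableOn φs (Set.Ioc t c') volume :=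
    hφs_int.mono_set (Set.Ioc_subset_Ioc ht0.le hc'1)
  -- the integral over (0,t] equals t * A
  have htA : ∫ u in Set.Ioc (0:ℝ) t, φs u = t * A := by
    rw [hA]; field_simp
  -- φs t ≤ A
  have hφst_le_A : φs t ≤ A := by
    have hlow : t * φs t ≤ ∫ u in Set.Ioc (0:ℝ) t, φs u := by
      have hconst : ∫ _ in Set.Ioc (0:ℝ) t, φs t = t * φs t := by
        rw [setIntegral_const, Measure.real, Real.volume_Ioc, ENNReal.toReal_ofReal (by linarith),
          smul_eq_mul]
        ring
      rw [← hconst]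
      refine setIntegral_mono_on ((integrableOn_const_iff (C := φs t)).2 (Or.inr ?_)) hφs_int_t
        measurableSet_Ioc fun s hs => hφs_anti ⟨hs.1, hs.2.trans ht1⟩ ⟨ht0, ht1⟩ hs.2
      rw [Real.volume_Ioc]
      exact ENNReal.ofReal_lt_top
    rw [htA] at hlow
    exact le_of_mul_le_mul_left hlow ht0
  -- strict weak-type estimate on each stopping set
  have hper : ∀ I ∈ G, ENNReal.ofReal A * μ I < ∫⁻ x in I, ENNReal.ofReal (φ x) ∂μ := by
    intro I hI
    obtain ⟨m, hg, havgI, _⟩ := hI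
    have hIs : I ∈ T.sets := T.gen_subset_sets m hg
    have hIm : MeasurableSet I := T.meas I hIs
    have hIfin : μ I ≠ ⊤ := (measure_lt_top μ I).ne
    have hIr : 0 < (μ I).toReal := ENNReal.toReal_pos (T.pos I hIs).ne' hIfin
    have habs : ∫ u in I, |φ u| ∂μ = ∫ u in I, φ u ∂μ :=
      setIntegral_congr_fun hIm fun u _ => abs_of_nonneg (hφ u)
    have hlt : A * (μ I).toReal < ∫ u in I, φ u ∂μ := by
      have := (lt_div_iff₀ hIr).1 havgI
      rwa [habs] at this
    calc ENNReal.ofReal A * μ I = ENNReal.ofReal (A * (μ I).toReal) := by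
          rw [ENNReal.ofReal_mul hA0, ENNReal.ofReal_toReal hIfin]
      _ < ENNReal.ofReal (∫ u in I, φ u ∂μ) :=
          (ENNReal.ofReal_lt_ofReal_iff
            (lt_of_le_of_lt (mul_nonneg hA0 hIr.le) hlt)).2 hlt
      _ = ∫⁻ x in I, ENNReal.ofReal (φ x) ∂μ :=
          ofReal_integral_eq_lintegral_ofReal hint.integrableOn
            ((ae_restrict_iff' hIm).2 (ae_of_all _ fun x _ => hφ x))
  -- index the family
  haveI : Countable ↥G := hGcnt.to_subtype
  have hU_eq : U = ⋃ i : ↥G, (i : Set X) := Set.sUnion_eq_iUnion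
  have hmeas' : ∀ i : ↥G, MeasurableSet (i : Set X) := fun i => T.meas i (hGsets i.2)
  have hdisj' : Pairwise (Function.onFun Disjoint fun i : ↥G => (i : Set X)) :=
    fun i j hij => hGdisj i.2 j.2 fun h => hij (Subtype.ext h)
  have lint_U : ∫⁻ x in U, ENNReal.ofReal (φ x) ∂μ
      = ∑' i : ↥G, ∫⁻ x in (i : Set X), ENNReal.ofReal (φ x) ∂μ := by
    rw [hU_eq, lintegral_iUnion hmeas' hdisj']
  have hμU : c = ∑' i : ↥G, μ (i : Set X) := by
    rw [hc, hU_eq, measure_iUnion hdisj' hmeas']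
  -- U is nonempty, so G has an element
  have hUne : ∃ i : ↥G, True := by
    have : (0:ENNReal) < c := lt_of_lt_of_le (by simpa using ht0) htc
    have : U.Nonempty := nonempty_of_measure_ne_zero this.ne'
    obtain ⟨x, hx⟩ := this
    obtain ⟨I, hI, _⟩ := Set.mem_sUnion.1 hx
    exact ⟨⟨I, hI⟩, trivial⟩
  obtain ⟨i₀, _⟩ := hUne
  -- strict weak type for the union
  have hlintfin : ∫⁻ x in U, ENNReal.ofReal (φ x) ∂μ ≠ ⊤ :=
    ((setLIntegral_le_lintegral U _).trans_lt hfinφ.lt_top).ne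
  have hweak : ENNReal.ofReal A * c < ∫⁻ x in U, ENNReal.ofReal (φ x) ∂μ := by
    rw [hμU, ← ENNReal.tsum_mul_left, lint_U]
    refine ENNReal.tsum_lt_tsum ?_ (fun i => (hper i i.2).le) (hper i₀ i₀.2)
    rw [ENNReal.tsum_mul_left, ← hμU]
    exact (ENNReal.mul_lt_top ENNReal.ofReal_lt_top hcfin.lt_top).ne
  -- Hardy-Littlewood: the integral over U is at most the integral of φs over (0,c']
  have hHL : ∫⁻ x in U, ENNReal.ofReal (φ x) ∂μ
      ≤ ∫⁻ s in Set.Ioc (0:ℝ) c', ENNReal.ofReal (φs s) := by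
    rw [LKs c' hc'1,
      lintegral_eq_lintegral_meas_lt (μ.restrict U)
        ((ae_restrict_iff' hUmeas).2 (ae_of_all _ fun x _ => hφ x))
        hint.aemeasurable.restrict]
    refine lintegral_mono fun y => ?_
    have h1 : (μ.restrict U) {x | y < φ x} ≤ c := by
      refine le_trans (measure_mono (Set.subset_univ _)) ?_
      rw [Measure.restrict_apply_univ]
    have h2 : (μ.restrict U) {x | y < φ x} ≤ volume {s ∈ Set.Ioc (0:ℝ) 1 | y < φs s} := by
      rw [← hφs_equi y]
      exact Measure.restrict_le_self _
    by_cases hcase : {s ∈ Set.Ioc (0:ℝ) 1 | y < φs s} ⊆ Set.Ioc 0 c'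
    · refine h2.trans (measure_mono fun s hs => ?_)
      exact ⟨hs.2, hcase hs⟩
    · obtain ⟨s₀, hs₀, hs₀'⟩ := Set.not_subset.1 hcase
      have hs₀c : c' < s₀ := by
        by_contra hle
        exact hs₀' ⟨hs₀.1.1, not_lt.1 hle⟩
      have hsub : Set.Ioc (0:ℝ) c' ⊆ {s | y < φs s} ∩ Set.Ioc 0 c' := by
        intro u hu
        refine ⟨?_, hu⟩
        have hu1 : u ∈ Set.Ioc (0:ℝ) 1 := ⟨hu.1, hu.2.trans hc'1⟩
        exact lt_of_lt_of_le hs₀.2 (hφs_anti hu1 hs₀.1 (hu.2.trans hs₀c.le))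
      refine h1.trans ?_
      calc c = volume (Set.Ioc (0:ℝ) c') := by
              rw [Real.volume_Ioc, sub_zero, hc_eq]
        _ ≤ _ := measure_mono hsub
  -- bound the integral of φs over (0,c'] by A * c
  have havgbound : ∫⁻ s in Set.Ioc (0:ℝ) c', ENNReal.ofReal (φs s)
      ≤ ENNReal.ofReal A * c := by
    have hsplit : Set.Ioc (0:ℝ) c' = Set.Ioc 0 t ∪ Set.Ioc t c' :=
      (Set.Ioc_union_Ioc_eq_Ioc ht0.le htc').symm
    rw [hsplit, lintegral_union measurableSet_Ioc (Set.Ioc_disjoint_Ioc_of_le le_rfl)]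
    have hp1 : ∫⁻ s in Set.Ioc (0:ℝ) t, ENNReal.ofReal (φs s)
        = ENNReal.ofReal (t * A) := by
      rw [← htA]
      exact (ofReal_integral_eq_lintegral_ofReal hφs_int_t
        ((ae_restrict_iff' measurableSet_Ioc).2
          (ae_of_all _ fun s hs => hφs_nonneg s (hIoc_sub hs)))).symm
    have hp2 : ∫⁻ s in Set.Ioc t c', ENNReal.ofReal (φs s)
        ≤ ENNReal.ofReal A * ENNReal.ofReal (c' - t) := by
      have : ∀ s ∈ Set.Ioc t c', ENNReal.ofReal (φs s) ≤ ENNReal.ofReal A := by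
        intro s hs
        refine ENNReal.ofReal_le_ofReal ?_
        exact (hφs_anti ⟨ht0, ht1⟩ ⟨ht0.trans hs.1, hs.2.trans hc'1⟩ hs.1.le).trans
          hφst_le_A
      calc ∫⁻ s in Set.Ioc t c', ENNReal.ofReal (φs s)
          ≤ ∫⁻ _ in Set.Ioc t c', ENNReal.ofReal A :=
            setLIntegral_mono' measurableSet_Ioc this
        _ = ENNReal.ofReal A * ENNReal.ofReal (c' - t) := by
            rw [setLIntegral_const, Real.volume_Ioc]
    calc (∫⁻ s in Set.Ioc (0:ℝ) t, ENNReal.ofReal (φs s))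
          + ∫⁻ s in Set.Ioc t c', ENNReal.ofReal (φs s)
        ≤ ENNReal.ofReal (t * A) + ENNReal.ofReal A * ENNReal.ofReal (c' - t) := by
          rw [hp1]; exact add_le_add_right hp2 _
      _ = ENNReal.ofReal A * (ENNReal.ofReal t + ENNReal.ofReal (c' - t)) := by
          rw [mul_add, mul_comm t A, ENNReal.ofReal_mul hA0]
      _ = ENNReal.ofReal A * c := by
          rw [← ENNReal.ofReal_add ht0.le (by linarith), hc_eq]
          ring_nf
  exact absurd (hweak.trans_le (hHL.trans havgbound)) (lt_irrefl _)
end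

section
/- Let (X, μ) be a non-atomic probability space with tree 𝒯. For every I ∈ 𝒯 and every α with 0 < α < 1, there exists a subfamily F(I) ⊆ 𝒯 of pairwise disjoint subsets of I such that μ(∪_{J ∈ F(I)} J) = Σ_{J ∈ F(I)} μ(J) = (1 - α) μ(I). -/
open MeasureTheory Set
open scoped Classical ENNReal

namespace TreeAux

variable {X : Type*} [MeasurableSpace X] {μ : Measure X} (T : MTree X μ)

theorem mem_sets_of_gen {J : Set X} {m : ℕ} (h : J ∈ T.gen m) : J ∈ T.sets :=
  mem_iUnion.mpr ⟨m, h⟩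

theorem gen_countable (m : ℕ) : (T.gen m).Countable := by
  induction m with
  | zero => rw [T.gen_zero]; exact countable_singleton _
  | succ m ih =>
    rw [T.gen_succ]
    exact ih.biUnion fun J hJ => T.child_countable J (mem_sets_of_gen T hJ)

theorem sets_countable : T.sets.Countable :=
  countable_iUnion (gen_countable T)

theorem gen_pairwise (m : ℕ) : (T.gen m).PairwiseDisjoint id := by
  induction m with
  | zero =>
    rw [T.gen_zero]
    exact pairwiseDisjoint_singleton _ _
  | succ m ih =>
    rw [T.gen_succ]
    intro J hJ K hK hne
    simp only [mem_iUnion, exists_prop] at hJ hK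
    obtain ⟨P, hP, hJP⟩ := hJ
    obtain ⟨Q, hQ, hKQ⟩ := hK
    by_cases hPQ : P = Q
    · subst hPQ
      exact T.child_disj P (mem_sets_of_gen T hP) hJP hKQ hne
    · exact (ih hP hQ hPQ).mono (T.child_sub P (mem_sets_of_gen T hP) J hJP)
        (T.child_sub Q (mem_sets_of_gen T hQ) K hKQ)

theorem subset_or_disjoint {k : ℕ} {K : Set X} (hK : K ∈ T.gen k) :
    ∀ {m : ℕ}, k ≤ m → ∀ {J : Set X}, J ∈ T.gen m → J ⊆ K ∨ Disjoint J K := by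
  intro m hm
  induction m, hm using Nat.le_induction with
  | base =>
    intro J hJ
    by_cases h : J = K
    · exact Or.inl (h ▸ subset_rfl)
    · exact Or.inr (gen_pairwise T k hJ hK h)
  | succ m hm ih =>
    intro J hJ
    rw [T.gen_succ] at hJ
    simp only [mem_iUnion, exists_prop] at hJ
    obtain ⟨P, hP, hJP⟩ := hJ
    have hsub : J ⊆ P := T.child_sub P (mem_sets_of_gen T hP) J hJP
    rcases ih hP with h | h
    · exact Or.inl (hsub.trans h)
    · exact Or.inr (h.mono_left hsub)

theorem exists_chain {I : Set X} {m0 : ℕ} (hI : I ∈ T.gen m0) {x : X} (hx : x ∈ I) :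
    ∀ m, ∃ J, J ∈ T.gen (m0 + m) ∧ x ∈ J ∧ J ⊆ I := by
  intro m
  induction m with
  | zero => exact ⟨I, by simpa using hI, hx, subset_rfl⟩
  | succ m ih =>
    obtain ⟨J, hJ, hxJ, hJI⟩ := ih
    have hJs : J ∈ ⋃ m, T.gen m := mem_sets_of_gen T hJ
    rw [← T.child_union J hJs] at hxJ
    obtain ⟨J', hJ'c, hxJ'⟩ := hxJ
    refine ⟨J', ?_, hxJ', (T.child_sub J hJs J' hJ'c).trans hJI⟩
    rw [← Nat.add_assoc, T.gen_succ]
    exact mem_iUnion.mpr ⟨J, mem_iUnion.mpr ⟨hJ, hJ'c⟩⟩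

end TreeAux

namespace GreedyAux

variable {X : Type*} [MeasurableSpace X]

/-- one greedy step -/
noncomputable def gStep (μ : Measure X) (t : ℝ≥0∞) (J : Set X) (g : Set (Set X)) :
    Set (Set X) :=
  if Disjoint J (⋃₀ g) ∧ μ (⋃₀ g) + μ J ≤ t then insert J g else g

/-- greedy over one generation -/
noncomputable def gGen (μ : Measure X) (t : ℝ≥0∞) (e : ℕ → Set X) (P : Set (Set X)) :
    ℕ → Set (Set X)
  | 0 => P
  | n + 1 => gStep μ t (e n) (gGen μ t e P n)

variable {μ : Measure X} {t : ℝ≥0∞} {e : ℕ → Set X} {P : Set (Set X)}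

theorem gGen_succ_subset (n : ℕ) : gGen μ t e P n ⊆ gGen μ t e P (n + 1) := by
  show gGen μ t e P n ⊆ gStep μ t (e n) (gGen μ t e P n)
  unfold gStep; split_ifs
  · exact subset_insert _ _
  · exact subset_rfl

theorem gGen_mono : Monotone (gGen μ t e P) :=
  monotone_nat_of_le_succ gGen_succ_subset

theorem mem_gGen {K : Set X} {n : ℕ} (h : K ∈ gGen μ t e P n) :
    K ∈ P ∨ ∃ k, K = e k := by
  induction n with
  | zero => exact Or.inl h
  | succ n ih =>
    revert h
    show K ∈ gStep μ t (e n) (gGen μ t e P n) → _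
    unfold gStep; split_ifs with hc
    · intro h
      rcases mem_insert_iff.mp h with h | h
      · exact Or.inr ⟨n, h⟩
      · exact ih h
    · exact ih

theorem gGen_pairwise (hP : P.PairwiseDisjoint id) (n : ℕ) :
    (gGen μ t e P n).PairwiseDisjoint id := by
  induction n with
  | zero => exact hP
  | succ n ih =>
    show (gStep μ t (e n) (gGen μ t e P n)).PairwiseDisjoint id
    unfold gStep; split_ifs with hc
    · exact ih.insert fun K hK _ => (disjoint_sUnion_right.mp hc.1 K hK)
    · exact ih

theorem gGen_budget (hP : μ (⋃₀ P) ≤ t) (n : ℕ) : μ (⋃₀ gGen μ t e P n) ≤ t := by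
  induction n with
  | zero => exact hP
  | succ n ih =>
    show μ (⋃₀ gStep μ t (e n) (gGen μ t e P n)) ≤ t
    unfold gStep; split_ifs with hc
    · rw [sUnion_insert]
      calc μ (e n ∪ ⋃₀ gGen μ t e P n)
          ≤ μ (e n) + μ (⋃₀ gGen μ t e P n) := measure_union_le _ _
        _ = μ (⋃₀ gGen μ t e P n) + μ (e n) := add_comm _ _
        _ ≤ t := hc.2
    · exact ih

theorem gStep_reject {J : Set X} {g : Set (Set X)} {x : X} (hx : x ∈ J)
    (hx' : x ∉ ⋃₀ gStep μ t J g) (hd : Disjoint J (⋃₀ g)) :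
    t < μ (⋃₀ g) + μ J := by
  by_contra h
  push_neg at h
  apply hx'
  unfold gStep
  rw [if_pos ⟨hd, h⟩, sUnion_insert]
  exact Or.inl hx

/-- the full greedy construction over all generations -/
noncomputable def gA (μ : Measure X) (t : ℝ≥0∞) (e : ℕ → ℕ → Set X) :
    ℕ → ℕ → Set (Set X)
  | 0 => gGen μ t (e 0) ∅
  | m + 1 => gGen μ t (e (m + 1)) (⋃ n, gA μ t e m n)

variable {e : ℕ → ℕ → Set X}

theorem gA_succ_n (m n : ℕ) :
    gA μ t e m (n + 1) = gStep μ t (e m n) (gA μ t e m n) := by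
  cases m <;> rfl

theorem gA_mono_n (m : ℕ) : Monotone (gA μ t e m) := by
  cases m <;> exact gGen_mono

theorem gA_succ_zero (m : ℕ) : gA μ t e (m + 1) 0 = ⋃ n, gA μ t e m n := rfl

theorem gA_subset_succ (m n n' : ℕ) : gA μ t e m n ⊆ gA μ t e (m + 1) n' := by
  calc gA μ t e m n ⊆ ⋃ k, gA μ t e m k := subset_iUnion _ n
    _ = gA μ t e (m + 1) 0 := (gA_succ_zero m).symm
    _ ⊆ gA μ t e (m + 1) n' := gA_mono_n _ (Nat.zero_le _)

theorem gA_subset_of_lt {m : ℕ} : ∀ {m' : ℕ}, m < m' → ∀ n n',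
    gA μ t e m n ⊆ gA μ t e m' n'
  | 0, h => by omega
  | m' + 1, h => fun n n' => by
    rcases Nat.lt_succ_iff_lt_or_eq.mp h with h' | h'
    · exact (gA_subset_of_lt h' n 0).trans (gA_subset_succ m' 0 n')
    · subst h'; exact gA_subset_succ m n n'

theorem gA_directed : Directed (· ⊆ ·) (fun p : ℕ × ℕ => gA μ t e p.1 p.2) := by
  rintro ⟨m, n⟩ ⟨m', n'⟩
  rcases lt_trichotomy m m' with h | h | h
  · exact ⟨(m', n'), gA_subset_of_lt h n n', subset_rfl⟩
  · subst h
    exact ⟨(m, max n n'), gA_mono_n m (le_max_left _ _), gA_mono_n m (le_max_right _ _)⟩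
  · exact ⟨(m, n), subset_rfl, gA_subset_of_lt h n' n⟩

theorem mem_gA {K : Set X} {m n : ℕ} (h : K ∈ gA μ t e m n) :
    ∃ m' ≤ m, ∃ k, K = e m' k := by
  induction m generalizing n with
  | zero =>
    rcases mem_gGen h with h' | ⟨k, hk⟩
    · exact absurd h' (notMem_empty K)
    · exact ⟨0, le_rfl, k, hk⟩
  | succ m ih =>
    rcases mem_gGen h with h' | ⟨k, hk⟩
    · obtain ⟨n', hn'⟩ := mem_iUnion.mp h'
      obtain ⟨m', hm', k, hk⟩ := ih hn'
      exact ⟨m', hm'.trans (Nat.le_succ m), k, hk⟩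
    · exact ⟨m + 1, le_rfl, k, hk⟩

theorem gA_pairwise (m : ℕ) : ∀ n, (gA μ t e m n).PairwiseDisjoint id := by
  induction m with
  | zero => exact fun n => gGen_pairwise (pairwiseDisjoint_empty) n
  | succ m ih =>
    intro n
    refine gGen_pairwise ?_ n
    intro a ha b hb hab
    obtain ⟨na, hna⟩ := mem_iUnion.mp ha
    obtain ⟨nb, hnb⟩ := mem_iUnion.mp hb
    exact ih (max na nb) (gA_mono_n m (le_max_left _ _) hna)
      (gA_mono_n m (le_max_right _ _) hnb) hab

theorem gA_budget (m : ℕ) : ∀ n, μ (⋃₀ gA μ t e m n) ≤ t := by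
  induction m with
  | zero =>
    refine fun n => gGen_budget ?_ n
    simp
  | succ m ih =>
    intro n
    refine gGen_budget ?_ n
    rw [sUnion_iUnion]
    have hd : Directed (· ⊆ ·) (fun k => ⋃₀ gA μ t e m k) :=
      Directed.mono_comp (· ⊆ ·) (fun _ _ h => sUnion_mono h)
        (gA_mono_n (μ := μ) (t := t) (e := e) m).directed_le
    rw [Directed.measure_iUnion hd]
    exact iSup_le ih

end GreedyAux


/-- Lemma 2.2: for every `I` in the tree and `0 < α < 1` there is a countable
family of pairwise disjoint tree elements inside `I` of total measure `(1-α) μ(I)`. -/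
theorem exists_subfamily_of_measure
    {X : Type*} [MeasurableSpace X] (μ : Measure X) [IsProbabilityMeasure μ]
    [NullSingletonClass μ] (T : MTree X μ)
    (I : Set X) (hI : I ∈ T.sets) (α : ℝ) (hα : α ∈ Set.Ioo (0:ℝ) 1) :
    ∃ F : Set (Set X), F ⊆ T.sets ∧ F.Countable ∧ (∀ J ∈ F, J ⊆ I) ∧
      F.PairwiseDisjoint id ∧
      μ (⋃₀ F) = ENNReal.ofReal (1 - α) * μ I ∧
      ∑' J : F, μ (J : Set X) = ENNReal.ofReal (1 - α) * μ I := by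
  classical
  obtain ⟨hα0, hα1⟩ := hα
  obtain ⟨m0, hm0⟩ := mem_iUnion.mp hI
  set t : ℝ≥0∞ := ENNReal.ofReal (1 - α) * μ I with ht
  have hμpos : 0 < μ I := T.pos I hI
  have hμtop : μ I ≠ ⊤ := measure_ne_top μ I
  have htlt : t < μ I := by
    have h1 : ENNReal.ofReal (1 - α) < 1 := ENNReal.ofReal_lt_one.mpr (by linarith)
    calc t < 1 * μ I := ENNReal.mul_lt_mul_left hμpos.ne' hμtop h1
      _ = μ I := one_mul _
  have hDcount : ∀ m : ℕ, (insert (∅ : Set X) {J | J ∈ T.gen (m0 + m) ∧ J ⊆ I}).Countable :=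
    fun m => Set.Countable.insert _
      ((TreeAux.gen_countable T (m0 + m)).mono (fun J hJ => hJ.1))
  choose e he using fun m => (hDcount m).exists_eq_range ⟨∅, mem_insert _ _⟩
  set A : ℕ → ℕ → Set (Set X) := GreedyAux.gA μ t e with hA
  have hmemA : ∀ m n K, K ∈ A m n → K = ∅ ∨ ∃ m' ≤ m, K ∈ T.gen (m0 + m') ∧ K ⊆ I := by
    intro m n K hK
    obtain ⟨m', hm', k, hk⟩ := GreedyAux.mem_gA hK
    have hKmem : K ∈ insert (∅ : Set X) {J | J ∈ T.gen (m0 + m') ∧ J ⊆ I} := by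
      rw [he m']; exact hk ▸ mem_range_self k
    rcases hKmem with h | h
    · exact Or.inl h
    · exact Or.inr ⟨m', hm', h.1, h.2⟩
  set F' : Set (Set X) := ⋃ p : ℕ × ℕ, A p.1 p.2 with hF'
  set F : Set (Set X) := F' \ {(∅ : Set X)} with hF
  have hmemF' : ∀ K ∈ F', K = ∅ ∨ (K ∈ T.sets ∧ K ⊆ I) := by
    intro K hK
    obtain ⟨p, hp⟩ := mem_iUnion.mp hK
    rcases hmemA p.1 p.2 K hp with h | ⟨m', _, h1, h2⟩
    exacts [Or.inl h, Or.inr ⟨TreeAux.mem_sets_of_gen T h1, h2⟩]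
  have hFsets : F ⊆ T.sets := by
    rintro K ⟨hK, hKne⟩
    rcases hmemF' K hK with h | h
    · exact absurd h hKne
    · exact h.1
  have hFI : ∀ J ∈ F, J ⊆ I := by
    rintro K ⟨hK, hKne⟩
    rcases hmemF' K hK with h | h
    · exact absurd h hKne
    · exact h.2
  have hFcount : F.Countable := Set.Countable.mono hFsets (TreeAux.sets_countable T)
  have hdir : Directed (· ⊆ ·) (fun p : ℕ × ℕ => A p.1 p.2) := GreedyAux.gA_directed
  have hF'pair : F'.PairwiseDisjoint id := by
    intro a ha b hb hab
    obtain ⟨p, hp⟩ := mem_iUnion.mp ha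
    obtain ⟨q, hq⟩ := mem_iUnion.mp hb
    obtain ⟨r, hpr, hqr⟩ := hdir p q
    exact GreedyAux.gA_pairwise r.1 r.2 (hpr hp) (hqr hq) hab
  have hFpair : F.PairwiseDisjoint id := hF'pair.subset diff_subset
  have hsU : ⋃₀ F = ⋃₀ F' := by
    apply Subset.antisymm (sUnion_mono diff_subset)
    rintro x ⟨K, hK, hxK⟩
    refine ⟨K, ⟨hK, ?_⟩, hxK⟩
    intro h
    rw [mem_singleton_iff] at h
    subst h
    exact absurd hxK (notMem_empty x)
  have hSle : μ (⋃₀ F') ≤ t := by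
    have hrw : ⋃₀ F' = ⋃ p : ℕ × ℕ, ⋃₀ A p.1 p.2 := by rw [hF', sUnion_iUnion]
    have hd2 : Directed (· ⊆ ·) (fun p : ℕ × ℕ => ⋃₀ A p.1 p.2) := by
      intro p q
      obtain ⟨r, h1, h2⟩ := hdir p q
      exact ⟨r, sUnion_mono h1, sUnion_mono h2⟩
    rw [hrw, Directed.measure_iUnion hd2]
    exact iSup_le fun p => GreedyAux.gA_budget p.1 p.2
  obtain ⟨x, hxI, hxF'⟩ : ∃ x ∈ I, x ∉ ⋃₀ F' := by
    by_contra h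
    push_neg at h
    exact absurd ((measure_mono h).trans hSle) (not_le.mpr htlt)
  have key : ∀ m, t ≤ μ (⋃₀ F') + ⨆ K ∈ T.gen (m0 + m), μ K := by
    intro m
    obtain ⟨J, hJg, hxJ, hJI⟩ := TreeAux.exists_chain T hm0 hxI m
    have hJr : J ∈ range (e m) := by
      rw [← he m]; exact mem_insert_iff.mpr (Or.inr ⟨hJg, hJI⟩)
    obtain ⟨n, hn⟩ := hJr
    have hsubF' : ∀ n', A m n' ⊆ F' :=
      fun n' => subset_iUnion (fun p : ℕ × ℕ => A p.1 p.2) (m, n')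
    have hdisj : Disjoint J (⋃₀ A m n) := by
      rw [disjoint_sUnion_right]
      intro K hK
      rcases hmemA m n K hK with h | ⟨m', hm', hKg, _⟩
      · simp [h]
      · rcases TreeAux.subset_or_disjoint T hKg
          (by omega : m0 + m' ≤ m0 + m) hJg with h | h
        · exact absurd (mem_sUnion.mpr ⟨K, hsubF' n hK, h hxJ⟩) hxF'
        · exact h
    have hxs : x ∉ ⋃₀ GreedyAux.gStep μ t (e m n) (A m n) := by
      rw [show GreedyAux.gStep μ t (e m n) (A m n) = A m (n + 1) from
        (GreedyAux.gA_succ_n m n).symm]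
      exact fun hx => hxF' (sUnion_mono (hsubF' (n + 1)) hx)
    have hrej : t < μ (⋃₀ A m n) + μ (e m n) :=
      GreedyAux.gStep_reject (show x ∈ e m n by rw [hn]; exact hxJ) hxs
        (show Disjoint (e m n) (⋃₀ A m n) by rw [hn]; exact hdisj)
    calc t ≤ μ (⋃₀ A m n) + μ (e m n) := hrej.le
      _ ≤ μ (⋃₀ F') + ⨆ K ∈ T.gen (m0 + m), μ K := by
        refine add_le_add (measure_mono (sUnion_mono (hsubF' n))) ?_
        rw [hn]
        exact le_biSup _ hJg
  have hδ : Filter.Tendsto (fun m => ⨆ K ∈ T.gen (m0 + m), μ K)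
      Filter.atTop (nhds 0) := by
    have h := T.shrink.comp (Filter.tendsto_add_atTop_nat m0)
    simpa [Function.comp_def, Nat.add_comm] using h
  have hge : t ≤ μ (⋃₀ F') + 0 :=
    ge_of_tendsto' (Filter.Tendsto.add tendsto_const_nhds hδ) key
  have hSt : μ (⋃₀ F') = t := le_antisymm hSle (by simpa using hge)
  have hpairw : F.Pairwise Disjoint := fun a ha b hb hab => hFpair ha hb hab
  have hsum : μ (⋃₀ F) = ∑' s : F, μ (s : Set X) :=
    measure_sUnion hFcount hpairw (fun s hs => T.meas s (hFsets hs))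
  refine ⟨F, hFsets, hFcount, hFI, hFpair, ?_, ?_⟩
  · rw [hsU, hSt]
  · rw [← hsum, hsU, hSt]
end
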